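/- arXiv:2109.08658 — 8 statements merged into one kernel-verified Lean document; each statement's English description precedes it below -/
import Mathlib

section
/- Let E be a finite-dimensional real inner product space and let σ_1,…,σ_k ⊆ E be closed convex cones, each equal to the closure of its (nonempty) interior, whose union is all of E and whose interiors are pairwise disjoint. Let v_1,…,v_k ∈ E be points such that for each i, every w in the interior of σ_i, and every j ≠ i one has ⟨w, v_i⟩ > ⟨w, v_j⟩. Let P := convexHull{v_1,…,v_k}. Then: (1) the points v_1,…,v_k are pairwise distinct and the set of extreme points of P is exactly {v_1,…,v_k}; (2) for each i, σ_i = {w ∈ E : ⟨w, v_i⟩ ≥ ⟨w, p⟩ for all p ∈ P}. Moreover, if in addition each σ_i contains no line (σ_i ∩ (−σ_i) = {0}), then the affine span of P is all of E. -/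
/-!
Each `σ i` coincides with the cone `maxCone v i` of directions `w` in which `v i` maximizes
`⟪w, v ·⟫`: the hypothesis on interiors gives `σ i ⊆ maxCone v i` after taking closures; a strict
maximizer cannot lie in any `σ j` with `j ≠ i`, so by the covering property it lies in `σ i`; and
every weak maximizer is a limit of strict ones along a segment towards a point of `interior (σ i)`.
A direction strictly maximized by `v i` exposes `v i` as a vertex of the hull, and a vector
orthogonal to the affine span of the `v j` lies in `maxCone v i ∩ -maxCone v i`.
-/

open scoped InnerProductSpace Pointwise
open Set

section ConvexHull

variable {E : Type*} [AddCommGroup E] [Module ℝ E] {s : Set E} {x : E}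

theorem forall_mem_convexHull_le_iff (l : E →ₗ[ℝ] ℝ) (c : ℝ) :
    (∀ p ∈ convexHull ℝ s, l p ≤ c) ↔ ∀ y ∈ s, l y ≤ c :=
  (convex_halfSpace_le l.isLinear c).convexHull_subset_iff

theorem eq_of_mem_convexHull_of_le (l : E →ₗ[ℝ] ℝ) (h : ∀ y ∈ s, y ≠ x → l y < l x)
    {p : E} (hp : p ∈ convexHull ℝ s) (hle : l x ≤ l p) : p = x := by
  obtain hs | hs := (s \ {x}).eq_empty_or_nonempty
  · have hsx : convexHull ℝ s ⊆ {x} := by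
      rw [← convexHull_singleton (𝕜 := ℝ) x]
      exact convexHull_mono (sdiff_eq_empty.mp hs)
    exact hsx hp
  -- `p` lies on a segment from `x` to a point of `convexHull ℝ (s \ {x})`, where `l < l x`.
  have hp' : p ∈ convexJoin ℝ {x} (convexHull ℝ (s \ {x})) := by
    rw [← convexHull_insert hs]
    exact convexHull_mono (subset_insert_sdiff_singleton x s) hp
  obtain ⟨y, hy : y = x, q, hq, a, b, ha, hb, hab, rfl⟩ := mem_convexJoin.1 hp'
  subst y
  have hlq : l q < l x :=
    (convex_halfSpace_lt l.isLinear _).convexHull_subset_iff.2 (fun y hy => h y hy.1 hy.2) hq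
  obtain rfl : a = 1 - b := by linarith
  have hb0 : b = 0 := by
    simp only [map_add, map_smul, smul_eq_mul] at hle
    nlinarith
  simp [hb0]

theorem mem_exposedPoints_convexHull [TopologicalSpace E] (hx : x ∈ s) (l : StrongDual ℝ E)
    (h : ∀ y ∈ s, y ≠ x → l y < l x) : x ∈ (convexHull ℝ s).exposedPoints ℝ := by
  have hle : ∀ y ∈ s, l y ≤ l x := fun y hy =>
    (eq_or_ne y x).elim (fun hyx => hyx ▸ le_rfl) fun hyx => (h y hy hyx).le
  exact ⟨subset_convexHull ℝ s hx, l, fun y hy =>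
    ⟨(forall_mem_convexHull_le_iff l.toLinearMap _).2 hle y hy,
      eq_of_mem_convexHull_of_le l.toLinearMap h hy⟩⟩

end ConvexHull

section MaxCone

variable {E ι : Type*} [NormedAddCommGroup E] [InnerProductSpace ℝ E] (v : ι → E) (i : ι)

def maxCone : Set E := {w | ∀ j, ⟪w, v j⟫_ℝ ≤ ⟪w, v i⟫_ℝ}

def strictMaxCone : Set E := {w | ∀ j ≠ i, ⟪w, v j⟫_ℝ < ⟪w, v i⟫_ℝ}

theorem isClosed_maxCone : IsClosed (maxCone v i) := by
  simp only [maxCone, ofPred_forall]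
  exact isClosed_iInter fun j => isClosed_le (by fun_prop) (by fun_prop)

theorem strictMaxCone_subset_maxCone : strictMaxCone v i ⊆ maxCone v i := fun _ hw j =>
  (eq_or_ne j i).elim (fun hji => hji ▸ le_rfl) fun hji => (hw j hji).le

variable {v i}

theorem openSegment_subset_strictMaxCone {w u : E} (hw : w ∈ maxCone v i)
    (hu : u ∈ strictMaxCone v i) : openSegment ℝ w u ⊆ strictMaxCone v i := by
  rintro _ ⟨a, b, ha, hb, -, rfl⟩ j hji
  simp only [inner_add_left, real_inner_smul_left]
  nlinarith [hw j, hu j hji]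

theorem closure_strictMaxCone (h : (strictMaxCone v i).Nonempty) :
    closure (strictMaxCone v i) = maxCone v i := by
  obtain ⟨u, hu⟩ := h
  refine (closure_minimal (strictMaxCone_subset_maxCone v i) (isClosed_maxCone v i)).antisymm
    fun w hw => ?_
  exact closure_mono (openSegment_subset_strictMaxCone hw hu)
    (segment_subset_closure_openSegment (left_mem_segment ℝ w u))

variable (v i)

theorem maxCone_eq_setOf_forall_mem_convexHull :
    maxCone v i = {w | ∀ p ∈ convexHull ℝ (range v), ⟪w, p⟫_ℝ ≤ ⟪w, v i⟫_ℝ} := by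
  ext w
  exact ((forall_mem_convexHull_le_iff (innerₛₗ ℝ w) _).trans forall_mem_range).symm

theorem injective_of_forall_strictMaxCone_nonempty (h : ∀ i, (strictMaxCone v i).Nonempty) :
    Function.Injective v := by
  intro i j hij
  by_contra hne
  obtain ⟨w, hw⟩ := h i
  exact (hw j (Ne.symm hne)).ne (by rw [hij])

variable {v i}

theorem mem_exposedPoints_of_mem_strictMaxCone {w : E} (hw : w ∈ strictMaxCone v i) :
    v i ∈ (convexHull ℝ (range v)).exposedPoints ℝ := by
  refine mem_exposedPoints_convexHull (mem_range_self i) (innerSL ℝ w) ?_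
  rintro _ ⟨j, rfl⟩ hj
  exact hw j fun hji => hj (hji ▸ rfl)

variable (v i)

theorem orthogonal_vectorSpan_subset_maxCone :
    ((vectorSpan ℝ (range v))ᗮ : Set E) ⊆ maxCone v i := by
  intro w hw j
  have h := Submodule.inner_right_of_mem_orthogonal
    (vsub_mem_vectorSpan ℝ (mem_range_self j) (mem_range_self i)) hw
  rw [real_inner_comm, vsub_eq_sub, inner_sub_right] at h
  linarith

theorem affineSpan_convexHull_eq_top [FiniteDimensional ℝ E]
    (h : maxCone v i ∩ -maxCone v i = {0}) : affineSpan ℝ (convexHull ℝ (range v)) = ⊤ := by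
  rw [affineSpan_convexHull, AffineSubspace.affineSpan_eq_top_iff_vectorSpan_eq_top_of_nonempty
    ℝ E E (range_nonempty_iff_nonempty.2 ⟨i⟩), ← Submodule.orthogonal_eq_bot_iff, Submodule.eq_bot_iff]
  intro w hw
  have hw' : w ∈ maxCone v i ∩ -maxCone v i := ⟨orthogonal_vectorSpan_subset_maxCone v i hw,
    orthogonal_vectorSpan_subset_maxCone v i (Submodule.neg_mem _ hw)⟩
  rwa [h] at hw'

end MaxCone

section ConicDissection

variable {E ι : Type*} [NormedAddCommGroup E] [InnerProductSpace ℝ E] {σ : ι → Set E}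
  {v : ι → E} {i : ι}

theorem subset_maxCone_of_interior_subset (hreg : σ i = closure (interior (σ i)))
    (hmax : interior (σ i) ⊆ strictMaxCone v i) : σ i ⊆ maxCone v i := by
  rw [hreg]
  exact closure_minimal (hmax.trans (strictMaxCone_subset_maxCone v i)) (isClosed_maxCone v i)

theorem strictMaxCone_subset_of_iUnion_eq_univ (hcover : ⋃ j, σ j = univ)
    (hσ : ∀ j, σ j ⊆ maxCone v j) : strictMaxCone v i ⊆ σ i := by
  intro w hw
  obtain ⟨j, hj⟩ := mem_iUnion.1 (hcover.symm ▸ mem_univ w : w ∈ ⋃ j, σ j)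
  obtain rfl | hji := eq_or_ne j i
  · exact hj
  · exact absurd (hσ j hj i) (hw j hji).not_ge

theorem eq_maxCone_of_interior_subset_strictMaxCone
    (hreg : ∀ j, σ j = closure (interior (σ j))) (hne : ∀ j, (interior (σ j)).Nonempty)
    (hcover : ⋃ j, σ j = univ) (hmax : ∀ j, interior (σ j) ⊆ strictMaxCone v j) :
    σ i = maxCone v i := by
  have hclosed : IsClosed (σ i) := by rw [hreg i]; exact isClosed_closure
  refine (subset_maxCone_of_interior_subset (hreg i) (hmax i)).antisymm ?_
  rw [← closure_strictMaxCone ((hne i).mono (hmax i))]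
  exact closure_minimal (strictMaxCone_subset_of_iUnion_eq_univ hcover
    fun j => subset_maxCone_of_interior_subset (hreg j) (hmax j)) hclosed

end ConicDissection

theorem main_tool_general {E : Type*} [NormedAddCommGroup E] [InnerProductSpace ℝ E]
    [FiniteDimensional ℝ E] {k : ℕ} (σ : Fin k → Set E) (v : Fin k → E)
    (hreg : ∀ i, σ i = closure (interior (σ i)))
    (hne : ∀ i, (interior (σ i)).Nonempty)
    (hcover : (⋃ i, σ i) = Set.univ)
    (hmax : ∀ i, ∀ w ∈ interior (σ i), ∀ j, j ≠ i → ⟪w, v j⟫_ℝ < ⟪w, v i⟫_ℝ) :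
    (Function.Injective v ∧
      Set.extremePoints ℝ (convexHull ℝ (Set.range v)) = Set.range v) ∧
    (∀ i, σ i = {w : E | ∀ p ∈ convexHull ℝ (Set.range v), ⟪w, p⟫_ℝ ≤ ⟪w, v i⟫_ℝ}) ∧
    ((∀ i, σ i ∩ -σ i = {0}) → affineSpan ℝ (convexHull ℝ (Set.range v)) = ⊤) := by
  have hσ : ∀ i, σ i = maxCone v i := fun i =>
    eq_maxCone_of_interior_subset_strictMaxCone hreg hne hcover hmax
  have hstrict : ∀ i, (strictMaxCone v i).Nonempty := fun i => (hne i).mono (hmax i)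
  refine ⟨⟨injective_of_forall_strictMaxCone_nonempty v hstrict, ?_⟩,
    fun i => (hσ i).trans (maxCone_eq_setOf_forall_mem_convexHull v i), fun hpointed => ?_⟩
  · refine extremePoints_convexHull_subset.antisymm ?_
    rintro _ ⟨i, rfl⟩
    obtain ⟨w, hw⟩ := hstrict i
    exact exposedPoints_subset_extremePoints (mem_exposedPoints_of_mem_strictMaxCone hw)
  · obtain ⟨i, -⟩ := mem_iUnion.1 (hcover.symm ▸ mem_univ 0 : (0 : E) ∈ ⋃ i, σ i)
    exact affineSpan_convexHull_eq_top v i (hσ i ▸ hpointed i)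

/-- Lemma 2.9 ("main tool"): given a conic dissection `σ₁,…,σ_k` of a finite-dimensional real
inner product space `E` and points `v₁,…,v_k` such that each `v_i` strictly maximizes the
linear functional `⟨w, ·⟩` among the `v_j` for every `w` in the interior of `σ_i`, the `v_i`
are the extreme points of their convex hull `P`, each `σ_i` is the normal cone of `P` at `v_i`,
and if moreover each `σ_i` is pointed then `P` is full-dimensional. -/
theorem main_tool {E : Type*} [NormedAddCommGroup E] [InnerProductSpace ℝ E]
    [FiniteDimensional ℝ E] {k : ℕ} (σ : Fin k → Set E) (v : Fin k → E)
    (hclosed : ∀ i, IsClosed (σ i))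
    (hconv : ∀ i, Convex ℝ (σ i))
    (hadd : ∀ i, ∀ x ∈ σ i, ∀ y ∈ σ i, x + y ∈ σ i)
    (hsmul : ∀ i, ∀ c : ℝ, 0 ≤ c → ∀ x ∈ σ i, c • x ∈ σ i)
    (hreg : ∀ i, σ i = closure (interior (σ i)))
    (hne : ∀ i, (interior (σ i)).Nonempty)
    (hcover : (⋃ i, σ i) = Set.univ)
    (hdisj : ∀ i j, i ≠ j → Disjoint (interior (σ i)) (interior (σ j)))
    (hmax : ∀ i, ∀ w ∈ interior (σ i), ∀ j, j ≠ i → ⟪w, v j⟫_ℝ < ⟪w, v i⟫_ℝ) :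
    (Function.Injective v ∧
      Set.extremePoints ℝ (convexHull ℝ (Set.range v)) = Set.range v) ∧
    (∀ i, σ i = {w : E | ∀ p ∈ convexHull ℝ (Set.range v), ⟪w, p⟫_ℝ ≤ ⟪w, v i⟫_ℝ}) ∧
    ((∀ i, σ i ∩ -σ i = {0}) → affineSpan ℝ (convexHull ℝ (Set.range v)) = ⊤) :=
  main_tool_general σ v hreg hne hcover hmax
end

section
/- Let r and s be two preorders (reflexive and transitive binary relations) on [n] = {1,…,n}. If the cones {x ∈ ℝ^n : x_i ≥ 0 for all i, and x_i ≤ x_j whenever r(i,j)} and {x ∈ ℝ^n : x_i ≥ 0 for all i, and x_i ≤ x_j whenever s(i,j)} are equal as subsets of ℝ^n, then r = s. -/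
/-! For a preorder `r` and an index `j`, the `0/1` vector vanishing exactly on the down-set
`{k | r k j}` lies in `σ̃_r` by transitivity, and by reflexivity it satisfies `x i ≤ x j` only if `r i j`.
So `σ̃_r ⊆ σ̃_s` forces `s ≤ r`. -/

/-- The modified preorder cone `σ̃_r` associated to a binary relation `r` on `[n]`:
`σ̃_r = {x ∈ ℝ^n : x_i ≥ 0 for all i, and x_i ≤ x_j whenever r i j}`. -/
def tildeCone (n : ℕ) (r : Fin n → Fin n → Prop) : Set (Fin n → ℝ) :=
  {x | (∀ i, 0 ≤ x i) ∧ ∀ i j, r i j → x i ≤ x j}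

variable {n : ℕ} {r s : Fin n → Fin n → Prop}

open Classical in
noncomputable def downSetIndicator (r : Fin n → Fin n → Prop) (j : Fin n) : Fin n → ℝ :=
  fun k => if r k j then 0 else 1

theorem downSetIndicator_mem_tildeCone (hr : Transitive r) (j : Fin n) :
    downSetIndicator r j ∈ tildeCone n r := by
  refine ⟨fun k => by unfold downSetIndicator; split_ifs <;> norm_num, fun k l hkl => ?_⟩
  unfold downSetIndicator
  by_cases hk : r k j
  · simp only [hk, if_true]
    split_ifs <;> norm_num
  · simp [hk, show ¬ r l j from fun hl => hk (hr hkl hl)]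

theorem rel_of_downSetIndicator_le (hr : Reflexive r) {i j : Fin n}
    (hij : downSetIndicator r j i ≤ downSetIndicator r j j) : r i j := by
  by_contra hrij
  norm_num [downSetIndicator, hrij, hr j] at hij

theorem le_of_tildeCone_subset (hr_refl : Reflexive r) (hr_trans : Transitive r)
    (h : tildeCone n r ⊆ tildeCone n s) : s ≤ r := fun i j hs =>
  rel_of_downSetIndicator_le hr_refl ((h (downSetIndicator_mem_tildeCone hr_trans j)).2 i j hs)

/-- Lemma 4.17: the map `r ↦ σ̃_r` is injective on preorders on `[n]`. -/
theorem tildeCone_injective (n : ℕ) (r s : Fin n → Fin n → Prop)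
    (hr_refl : Reflexive r) (hr_trans : Transitive r)
    (hs_refl : Reflexive s) (hs_trans : Transitive s)
    (h : tildeCone n r = tildeCone n s) : r = s :=
  le_antisymm (le_of_tildeCone_subset hs_refl hs_trans h.ge)
    (le_of_tildeCone_subset hr_refl hr_trans h.le)
end

section
/- For every n ≥ 1 and every bijection π : [n] → [n], there exists a unique plane binary tree T with n internal nodes such that π is a linear extension of the partial order ≼_T, i.e., such that i ≼_T j implies π(i) ≤ π(j) for all i, j ∈ [n]. -/
/-- A plane binary tree: either a leaf or an ordered pair of plane binary trees. -/
inductive PBTree : Type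
  | leaf : PBTree
  | node : PBTree → PBTree → PBTree
  deriving DecidableEq

namespace PBTree

/-- The number of internal nodes of a plane binary tree. -/
def nodes : PBTree → ℕ
  | leaf => 0
  | node l r => nodes l + nodes r + 1

/-- `anc T i j` means that the internal node of `T` with in-order (1-based) label `j`
lies on the path from the internal node labeled `i` to the root (inclusive);
this is the relation `i ≼_T j`. -/
def anc : PBTree → ℕ → ℕ → Prop
  | leaf, _, _ => False
  | node l r, i, j =>
      (j = nodes l + 1 ∧ 1 ≤ i ∧ i ≤ nodes l + nodes r + 1)
      ∨ anc l i j
      ∨ anc r (i - (nodes l + 1)) (j - (nodes l + 1))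

/-- The in-order label of the root of a plane binary tree (`0` for a leaf). -/
def rootLabel : PBTree → ℕ
  | leaf => 0
  | node l _ => nodes l + 1

/-- `childOf T i j` : the internal node of `T` labeled `i` is a child of the internal
node labeled `j` (labels are 1-based, in in-order). -/
def childOf : PBTree → ℕ → ℕ → Prop
  | leaf, _, _ => False
  | node l r, i, j =>
      (j = nodes l + 1 ∧
        ((l ≠ leaf ∧ i = rootLabel l) ∨ (r ≠ leaf ∧ i = nodes l + 1 + rootLabel r)))
      ∨ childOf l i j
      ∨ childOf r (i - (nodes l + 1)) (j - (nodes l + 1))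

/-- The subtree of `T` rooted at the internal node with (1-based, in-order) label `i`
(the result is a leaf if `i` is out of range). -/
def subtreeAt : PBTree → ℕ → PBTree
  | leaf, _ => leaf
  | node l r, i =>
      if i = nodes l + 1 then node l r
      else if i ≤ nodes l then subtreeAt l i
      else subtreeAt r (i - (nodes l + 1))

/-- `val α S := Σ_{k=1}^{t} α_k − Σ_{k=1}^{a} α_k − Σ_{k=1}^{b} α_k` where `t`, `a`, `b` are
the numbers of internal nodes of `S`, of its left subtree and of its right subtree. -/
def val (α : ℕ → ℝ) : PBTree → ℝ
  | leaf => 0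
  | node l r =>
      (∑ k ∈ Finset.Icc 1 (nodes l + nodes r + 1), α k)
        - (∑ k ∈ Finset.Icc 1 (nodes l), α k) - (∑ k ∈ Finset.Icc 1 (nodes r), α k)

end PBTree

/-- The vector `v_T^α ∈ ℝ^n`: its coordinate of (0-based) index `i` is
`val(α, T_(i+1))`, the value of the subtree rooted at the internal node labeled `i+1`. -/
def lodayVec (n : ℕ) (α : ℕ → ℝ) (T : PBTree) : Fin n → ℝ :=
  fun i => PBTree.val α (T.subtreeAt (i.1 + 1))

/-! The tree is the decreasing (Cartesian) tree of the word `π 1 ⋯ π n`. Every label lies below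
the root, so the root of a compatible tree must carry the position `k` of the largest letter;
the left and right subtrees are then exactly the trees compatible with the subwords to the left
and to the right of `k`, and induction on the length of the word gives existence and uniqueness
simultaneously. -/

namespace PBTree

variable {α : Type*} [LinearOrder α]

theorem nodes_eq_zero_iff {T : PBTree} : T.nodes = 0 ↔ T = leaf := by
  cases T <;> simp [nodes]

theorem anc_bounds {T : PBTree} {i j : ℕ} (h : T.anc i j) :
    1 ≤ i ∧ i ≤ T.nodes ∧ 1 ≤ j ∧ j ≤ T.nodes := by
  induction T generalizing i j with
  | leaf => exact h.elim
  | node l r ihl ihr =>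
    simp only [nodes]
    rcases h with h | h | h
    · omega
    · have := ihl h; omega
    · have := ihr h; omega

/-- With `f` reading `π` on 1-based labels, this says that `π` is a linear extension of `≼_T`. -/
def AncMonotone (T : PBTree) (f : ℕ → α) : Prop :=
  ∀ i j, T.anc i j → f i ≤ f j

theorem ancMonotone_node_iff {l r : PBTree} {f : ℕ → α} :
    (node l r).AncMonotone f ↔
      (∀ i ∈ Set.Icc 1 (node l r).nodes, f i ≤ f (l.nodes + 1)) ∧
        l.AncMonotone f ∧ r.AncMonotone (fun i => f (i + (l.nodes + 1))) := by
  constructor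
  · intro h
    refine ⟨fun i hi => h _ _ (Or.inl ⟨rfl, hi⟩), fun i j hij => h _ _ (Or.inr (Or.inl hij)),
      fun i j hij => h _ _ (Or.inr (Or.inr ?_))⟩
    simpa using hij
  · rintro ⟨hroot, hl, hr⟩ i j (⟨rfl, hi⟩ | hij | hij)
    · exact hroot i hi
    · exact hl i j hij
    · obtain ⟨hi, -, hj, -⟩ := anc_bounds hij
      simpa [Nat.sub_add_cancel (by omega : l.nodes + 1 ≤ i),
        Nat.sub_add_cancel (by omega : l.nodes + 1 ≤ j)] using hr _ _ hij

theorem ancMonotone_iff_forall_fin {T : PBTree} {f : ℕ → α} :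
    T.AncMonotone f ↔ ∀ i j : Fin T.nodes, T.anc (i + 1) (j + 1) → f (i + 1) ≤ f (j + 1) := by
  refine ⟨fun h i j => h _ _, fun h i j hij => ?_⟩
  obtain ⟨hi, hi', hj, hj'⟩ := anc_bounds hij
  obtain ⟨i, rfl⟩ : ∃ i', i = i' + 1 := ⟨i - 1, by omega⟩
  obtain ⟨j, rfl⟩ : ∃ j', j = j' + 1 := ⟨j - 1, by omega⟩
  exact h ⟨i, by omega⟩ ⟨j, by omega⟩ hij

theorem AncMonotone.nodes_left_add_one_eq {l r : PBTree} {f : ℕ → α}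
    (h : (node l r).AncMonotone f) (hf : Set.InjOn f (Set.Icc 1 (node l r).nodes)) {k : ℕ}
    (hk : k ∈ Set.Icc 1 (node l r).nodes) (hmax : ∀ i ∈ Set.Icc 1 (node l r).nodes, f i ≤ f k) :
    l.nodes + 1 = k := by
  have hroot : l.nodes + 1 ∈ Set.Icc 1 (node l r).nodes := by
    simp only [nodes, Set.mem_Icc]; omega
  exact hf hroot hk (le_antisymm (hmax _ hroot) ((ancMonotone_node_iff.1 h).1 k hk))

theorem existsUnique_ancMonotone (n : ℕ) (f : ℕ → α) (hf : Set.InjOn f (Set.Icc 1 n)) :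
    ∃! T : PBTree, T.nodes = n ∧ T.AncMonotone f := by
  induction n using Nat.strong_induction_on generalizing f with
  | _ n ih =>
  rcases Nat.eq_zero_or_pos n with rfl | hn
  · exact ⟨leaf, ⟨rfl, fun _ _ h => h.elim⟩, fun T hT => nodes_eq_zero_iff.1 hT.1⟩
  obtain ⟨k, hk, hmax⟩ := (Finset.Icc 1 n).exists_max_image f ⟨1, Finset.mem_Icc.2 ⟨le_rfl, hn⟩⟩
  simp only [Finset.mem_Icc] at hk hmax
  obtain ⟨l, ⟨hl, hlf⟩, hl_uniq⟩ := ih (k - 1) (by omega) f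
    (hf.mono (Set.Icc_subset_Icc le_rfl (by omega)))
  obtain ⟨r, ⟨hr, hrf⟩, hr_uniq⟩ := ih (n - k) (by omega) (fun i => f (i + k))
    (fun a ha b hb hab => by
      obtain ⟨-, ha⟩ := ha
      obtain ⟨-, hb⟩ := hb
      have : a + k = b + k := hf ⟨by omega, by omega⟩ ⟨by omega, by omega⟩ hab
      omega)
  refine ⟨node l r, ⟨by simp only [nodes]; omega, ?_⟩, ?_⟩
  · refine ancMonotone_node_iff.2 ⟨fun i hi => ?_, hlf, ?_⟩
    · rw [hl, Nat.sub_add_cancel hk.1]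
      exact hmax i (by simp only [nodes, Set.mem_Icc] at hi; omega)
    · simpa [hl, Nat.sub_add_cancel hk.1] using hrf
  · rintro (_ | ⟨l', r'⟩) ⟨hT, hTf⟩
    · simp only [nodes] at hT; omega
    have hk' : l'.nodes + 1 = k := by
      rw [← hT] at hf hk hmax
      exact hTf.nodes_left_add_one_eq hf hk hmax
    obtain ⟨-, hl'f, hr'f⟩ := ancMonotone_node_iff.1 hTf
    simp only [nodes] at hT
    subst hk'
    rw [hl_uniq l' ⟨by omega, hl'f⟩, hr_uniq r' ⟨by omega, hr'f⟩]

end PBTree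

theorem unique_tree_of_perm_general (n : ℕ) (π : Equiv.Perm (Fin n)) :
    ∃! T : PBTree, T.nodes = n ∧
      ∀ i j : Fin n, T.anc (i.1 + 1) (j.1 + 1) → π i ≤ π j := by
  let f : ℕ → ℕ := fun i => if h : i - 1 < n then π ⟨i - 1, h⟩ else 0
  have hf : Set.InjOn f (Set.Icc 1 n) := by
    intro a ha b hb hab
    simp only [Set.mem_Icc] at ha hb
    simp only [f, dif_pos (by omega : a - 1 < n), dif_pos (by omega : b - 1 < n)] at hab
    have : a - 1 = b - 1 := Fin.val_eq_of_eq (π.injective (Fin.ext hab))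
    omega
  refine (existsUnique_congr fun T => and_congr_right fun hT => ?_).1
    (PBTree.existsUnique_ancMonotone n f hf)
  subst hT
  simp [PBTree.ancMonotone_iff_forall_fin, f]

/-- Lemma 3.15: for every `n ≥ 1` and every permutation `π` of `[n]`, there is a unique
plane binary tree `T` with `n` internal nodes such that `π` is a linear extension of `≼_T`,
i.e. `i ≼_T j → π i ≤ π j`. -/
theorem unique_tree_of_perm (n : ℕ) (hn : 1 ≤ n) (π : Equiv.Perm (Fin n)) :
    ∃! T : PBTree, T.nodes = n ∧
      ∀ i j : Fin n, T.anc (i.1 + 1) (j.1 + 1) → π i ≤ π j :=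
  unique_tree_of_perm_general n π
end

section
/- Let α ∈ ℝ^n be strictly increasing and let T and T' be plane binary trees, each with n internal nodes. Then for every w ∈ ℝ^n satisfying w_i < w_j whenever the internal node labeled i is a child of the internal node labeled j in T, one has ⟨w, v_T^α⟩ ≥ ⟨w, v_{T'}^α⟩, with equality if and only if T = T'. -/
/-!
Write `u = v_T^α`, `u' = v_{T'}^α` and let `ρ` be the root label of `T`. Both vectors sum to
`α 1 + ⋯ + α n`, and `u'` satisfies Loday's associahedron inequalities: its sum over any `m`
consecutive labels is at least `α 1 + ⋯ + α m`, strictly so for a run that passes through the root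
of `T'` without being all of `T'` (splitting the run at that root, this is the convexity of the
partial sums of an increasing sequence). Hence `⟨w, u⟩ - ⟨w, u'⟩ = ∑ᵢ (w_ρ - w_i) (u'_i - u_i)`,
and Abel summation along the edges of `T` turns this into the sum, over the edges `c → p` of `T`,
of `(w_p - w_c) ∑_{i ≤_T c} (u'_i - u_i)`, whose terms are all nonnegative. If it vanishes, the
label sets of the two root subtrees of `T` are runs of minimal `u'`-sum, which forces `T'` to
split at the same label as `T`; recursing gives `T = T'`.
-/

open Finset

namespace PBTree

variable {α : ℕ → ℝ}

def psum (α : ℕ → ℝ) (m : ℕ) : ℝ := ∑ k ∈ Icc 1 m, α k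

lemma psum_zero : psum α 0 = 0 := by simp [psum]

lemma psum_succ (m : ℕ) : psum α (m + 1) = psum α m + α (m + 1) :=
  sum_Icc_succ_top (by omega) α

lemma psum_sub_le_psum_add_sub {N : ℕ} (hα : MonotoneOn α (Set.Icc 1 N)) {p m c : ℕ}
    (hpm : p ≤ m) (hN : m + c ≤ N) :
    psum α m - psum α p ≤ psum α (m + c) - psum α (p + c) := by
  induction m, hpm using Nat.le_induction with
  | base => simp
  | succ m hpm ih =>
    have hstep : α (m + 1) ≤ α (m + c + 1) :=
      hα ⟨by omega, by omega⟩ ⟨by omega, by omega⟩ (by omega)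
    rw [psum_succ, show m + 1 + c = m + c + 1 by omega, psum_succ]
    linarith [ih (by omega)]

lemma psum_sub_lt_psum_add_sub {N : ℕ} (hα : StrictMonoOn α (Set.Icc 1 N)) {p m c : ℕ}
    (hpm : p < m) (hc : 0 < c) (hN : m + c ≤ N) :
    psum α m - psum α p < psum α (m + c) - psum α (p + c) := by
  obtain ⟨k, rfl⟩ := Nat.exists_eq_add_of_lt hpm
  have hle := psum_sub_le_psum_add_sub hα.monotoneOn (p := p) (m := p + k) (c := c)
    (by omega) (by omega)
  have hstep : α (p + k + 1) < α (p + k + c + 1) :=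
    hα ⟨by omega, by omega⟩ ⟨by omega, by omega⟩ (by omega)
  rw [psum_succ, show p + k + 1 + c = p + k + c + 1 by omega, psum_succ]
  linarith

lemma psum_add_le {N : ℕ} (hα : MonotoneOn α (Set.Icc 1 N)) {p q L R : ℕ}
    (hp : p ≤ L) (hq : q ≤ R) (hN : L + R + 1 ≤ N) :
    psum α (p + 1 + q) + psum α L + psum α R ≤ psum α (L + R + 1) + psum α p + psum α q := by
  have h₁ := psum_sub_le_psum_add_sub hα hp (c := q + 1) (by omega)
  have h₂ := psum_sub_le_psum_add_sub hα hq (c := L + 1) (by omega)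
  rw [show p + (q + 1) = p + 1 + q by omega] at h₁
  rw [show R + (L + 1) = L + R + 1 by omega, show q + (L + 1) = L + (q + 1) by omega] at h₂
  linarith

lemma psum_add_lt {N : ℕ} (hα : StrictMonoOn α (Set.Icc 1 N)) {p q L R : ℕ}
    (hp : p ≤ L) (hq : q ≤ R) (hN : L + R + 1 ≤ N) (hne : p < L ∨ q < R) :
    psum α (p + 1 + q) + psum α L + psum α R < psum α (L + R + 1) + psum α p + psum α q := by
  have h₁ := psum_sub_le_psum_add_sub hα.monotoneOn hp (c := q + 1) (by omega)
  have h₂ := psum_sub_le_psum_add_sub hα.monotoneOn hq (c := L + 1) (by omega)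
  rw [show p + (q + 1) = p + 1 + q by omega] at h₁
  rw [show R + (L + 1) = L + R + 1 by omega, show q + (L + 1) = L + (q + 1) by omega] at h₂
  rcases hne with hlt | hlt
  · have := psum_sub_lt_psum_add_sub hα hlt (c := q + 1) (by omega) (by omega)
    rw [show p + (q + 1) = p + 1 + q by omega] at this
    linarith
  · have := psum_sub_lt_psum_add_sub hα hlt (c := L + 1) (by omega) (by omega)
    rw [show R + (L + 1) = L + R + 1 by omega, show q + (L + 1) = L + (q + 1) by omega] at this
    linarith

/-- Indexed by the 1-based labels: `lodayVec n α T i = lodayFun α T (i + 1)`. -/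
def lodayFun (α : ℕ → ℝ) (T : PBTree) (i : ℕ) : ℝ := val α (T.subtreeAt i)

lemma lodayFun_node_of_le {l r : PBTree} {i : ℕ} (h : i ≤ l.nodes) :
    lodayFun α (node l r) i = lodayFun α l i := by
  rw [lodayFun, subtreeAt, if_neg (by omega), if_pos h, lodayFun]

lemma lodayFun_node_root (l r : PBTree) :
    lodayFun α (node l r) (l.nodes + 1) =
      psum α (l.nodes + r.nodes + 1) - psum α l.nodes - psum α r.nodes := by
  rw [lodayFun, subtreeAt, if_pos rfl, val, psum, psum, psum]

lemma lodayFun_node_right {l r : PBTree} {i : ℕ} (h : 0 < i) :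
    lodayFun α (node l r) (l.nodes + 1 + i) = lodayFun α r i := by
  rw [lodayFun, subtreeAt, if_neg (by omega), if_neg (by omega), Nat.add_sub_cancel_left,
    lodayFun]

lemma nodes_node (l r : PBTree) : (node l r).nodes = l.nodes + r.nodes + 1 := rfl

lemma sum_range_nodes_node (f : ℕ → ℝ) (l r : PBTree) :
    ∑ i ∈ range (node l r).nodes, f (i + 1) =
      ∑ i ∈ range l.nodes, f (i + 1) + f (l.nodes + 1) +
        ∑ i ∈ range r.nodes, f (l.nodes + 1 + (i + 1)) := by
  rw [nodes_node, show l.nodes + r.nodes + 1 = l.nodes + 1 + r.nodes by omega, sum_range_add,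
    sum_range_succ]
  simp only [add_assoc]

lemma sum_lodayFun (T : PBTree) :
    ∑ i ∈ range T.nodes, lodayFun α T (i + 1) = psum α T.nodes := by
  induction T with
  | leaf => simp [nodes, psum_zero]
  | node l r ihl ihr =>
    have hl : ∑ i ∈ range l.nodes, lodayFun α (node l r) (i + 1) = psum α l.nodes := by
      rw [← ihl]
      exact sum_congr rfl fun i hi => lodayFun_node_of_le (by simp at hi; omega)
    have hr : ∑ i ∈ range r.nodes, lodayFun α (node l r) (l.nodes + 1 + (i + 1)) =
        psum α r.nodes := by
      rw [← ihr]
      exact sum_congr rfl fun i _ => lodayFun_node_right (Nat.succ_pos i)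
    rw [sum_range_nodes_node, hl, hr, lodayFun_node_root, nodes_node]
    ring

lemma sum_lodayFun_node_straddle (l r : PBTree) {a p : ℕ} (hp : a + p = l.nodes) (q : ℕ) :
    ∑ i ∈ range (p + 1 + q), lodayFun α (node l r) (a + i + 1) =
      ∑ i ∈ range p, lodayFun α l (a + i + 1) + lodayFun α (node l r) (l.nodes + 1) +
        ∑ i ∈ range q, lodayFun α r (i + 1) := by
  have hl : ∑ i ∈ range p, lodayFun α (node l r) (a + i + 1) =
      ∑ i ∈ range p, lodayFun α l (a + i + 1) :=
    sum_congr rfl fun i hi => lodayFun_node_of_le (by simp at hi; omega)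
  have hr : ∑ i ∈ range q, lodayFun α (node l r) (a + (p + 1 + i) + 1) =
      ∑ i ∈ range q, lodayFun α r (i + 1) := sum_congr rfl fun i _ => by
    rw [show a + (p + 1 + i) + 1 = l.nodes + 1 + (i + 1) by omega, lodayFun_node_right (by omega)]
  rw [sum_range_add, sum_range_succ, hl, hr, hp]

/-- The facet inequalities of Loday's realization of the associahedron. -/
def IntervalSumsGE (α : ℕ → ℝ) (N : ℕ) (v : ℕ → ℝ) : Prop :=
  ∀ a m, a + m ≤ N → psum α m ≤ ∑ i ∈ range m, v (a + i + 1)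

lemma IntervalSumsGE.mono {N M : ℕ} {v : ℕ → ℝ} (hv : IntervalSumsGE α N v) (h : M ≤ N) :
    IntervalSumsGE α M v :=
  fun a m hm => hv a m (hm.trans h)

lemma IntervalSumsGE.shift {M : ℕ} {v : ℕ → ℝ} (c : ℕ) (hv : IntervalSumsGE α (c + M) v) :
    IntervalSumsGE α M (fun i => v (c + i)) := fun a m hm => by
  simpa only [add_assoc] using hv (c + a) m (by omega)

lemma intervalSumsGE_lodayFun {N : ℕ} (hα : MonotoneOn α (Set.Icc 1 N)) :
    ∀ T : PBTree, T.nodes ≤ N → IntervalSumsGE α T.nodes (lodayFun α T)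
  | leaf, _, a, m, hm => by
    obtain rfl : m = 0 := by simp [nodes] at hm; omega
    simp [psum_zero]
  | node l r, hN, a, m, hm => by
    rw [nodes_node] at hN hm
    have ihl := intervalSumsGE_lodayFun hα l (by omega)
    have ihr := intervalSumsGE_lodayFun hα r (by omega)
    by_cases hleft : a + m ≤ l.nodes
    · rw [sum_congr rfl fun i hi => lodayFun_node_of_le (by simp at hi; omega)]
      exact ihl a m hleft
    by_cases hright : l.nodes + 1 ≤ a
    · obtain ⟨b, rfl⟩ := Nat.exists_eq_add_of_le hright
      rw [sum_congr rfl fun i _ => by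
        rw [show l.nodes + 1 + b + i + 1 = l.nodes + 1 + (b + i + 1) by omega,
          lodayFun_node_right (by omega)]]
      exact ihr b m (by omega)
    obtain ⟨p, hp⟩ : ∃ p, a + p = l.nodes := ⟨l.nodes - a, by omega⟩
    obtain ⟨q, rfl⟩ : ∃ q, m = p + 1 + q := ⟨m - (p + 1), by omega⟩
    rw [sum_lodayFun_node_straddle l r hp, lodayFun_node_root]
    have hsl := ihl a p (by omega)
    have hsr : psum α q ≤ ∑ i ∈ range q, lodayFun α r (i + 1) := by
      simpa using ihr 0 q (by omega)
    linarith [psum_add_le hα (p := p) (q := q) (by omega) (by omega) hN]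

lemma psum_lt_sum_lodayFun_node {N : ℕ} (hα : StrictMonoOn α (Set.Icc 1 N)) {l r : PBTree}
    (hN : (node l r).nodes ≤ N) {a p q : ℕ} (hp : a + p = l.nodes) (hq : q ≤ r.nodes)
    (hne : p < l.nodes ∨ q < r.nodes) :
    psum α (p + 1 + q) < ∑ i ∈ range (p + 1 + q), lodayFun α (node l r) (a + i + 1) := by
  rw [nodes_node] at hN
  rw [sum_lodayFun_node_straddle l r hp, lodayFun_node_root]
  have hsl := intervalSumsGE_lodayFun hα.monotoneOn l (by omega) a p (by omega)
  have hsr : psum α q ≤ ∑ i ∈ range q, lodayFun α r (i + 1) := by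
    simpa using intervalSumsGE_lodayFun hα.monotoneOn r (by omega) 0 q (by omega)
  linarith [psum_add_lt hα (p := p) (q := q) (by omega) hq hN hne]

def IncreasesToRoot (T : PBTree) (W : ℕ → ℝ) : Prop :=
  ∀ i j, T.childOf i j → W i < W j

namespace IncreasesToRoot

variable {l r : PBTree} {W : ℕ → ℝ}

lemma left (hW : IncreasesToRoot (node l r) W) : IncreasesToRoot l W :=
  fun i j h => hW i j (Or.inr (Or.inl h))

lemma right (hW : IncreasesToRoot (node l r) W) :
    IncreasesToRoot r (fun i => W (l.nodes + 1 + i)) :=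
  fun i j h => hW _ _ (Or.inr (Or.inr (by rwa [Nat.add_sub_cancel_left, Nat.add_sub_cancel_left])))

lemma rootLabel_left (hW : IncreasesToRoot (node l r) W) (hl : l ≠ leaf) :
    W l.rootLabel < W (l.nodes + 1) :=
  hW _ _ (Or.inl ⟨rfl, Or.inl ⟨hl, rfl⟩⟩)

lemma rootLabel_right (hW : IncreasesToRoot (node l r) W) (hr : r ≠ leaf) :
    W (l.nodes + 1 + r.rootLabel) < W (l.nodes + 1) :=
  hW _ _ (Or.inl ⟨rfl, Or.inr ⟨hr, rfl⟩⟩)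

end IncreasesToRoot

lemma rootLabel_bounds {T : PBTree} (hT : T ≠ leaf) :
    1 ≤ T.rootLabel ∧ T.rootLabel ≤ T.nodes := by
  cases T with
  | leaf => exact absurd rfl hT
  | node l r => simp only [rootLabel, nodes]; omega

lemma childOf_bounds : ∀ {T : PBTree} {i j : ℕ}, T.childOf i j →
    1 ≤ i ∧ i ≤ T.nodes ∧ 1 ≤ j ∧ j ≤ T.nodes
  | leaf, _, _, h => h.elim
  | node l r, i, j, h => by
    rw [nodes_node]
    rcases h with ⟨rfl, ⟨hl, rfl⟩ | ⟨hr, rfl⟩⟩ | h | h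
    · have := rootLabel_bounds hl; omega
    · have := rootLabel_bounds hr; omega
    · have := childOf_bounds h; omega
    · have := childOf_bounds h; omega

def gap (α W v : ℕ → ℝ) (T : PBTree) : ℝ :=
  ∑ i ∈ range T.nodes, (W T.rootLabel - W (i + 1)) * (v (i + 1) - lodayFun α T (i + 1))

lemma gap_eq_sub {W v : ℕ → ℝ} {T : PBTree}
    (hv : ∑ i ∈ range T.nodes, v (i + 1) = psum α T.nodes) :
    gap α W v T = ∑ i ∈ range T.nodes, W (i + 1) * lodayFun α T (i + 1) -
      ∑ i ∈ range T.nodes, W (i + 1) * v (i + 1) := by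
  simp only [gap, sub_mul, mul_sub, sum_sub_distrib, ← mul_sum, hv, sum_lodayFun]
  ring

lemma gap_congr {W v v' : ℕ → ℝ} {T : PBTree} (h : ∀ i < T.nodes, v (i + 1) = v' (i + 1)) :
    gap α W v T = gap α W v' T :=
  sum_congr rfl fun i hi => by rw [h i (mem_range.1 hi)]

lemma gap_node (W v : ℕ → ℝ) (l r : PBTree) :
    gap α W v (node l r) =
      gap α W v l + gap α (fun i => W (l.nodes + 1 + i)) (fun i => v (l.nodes + 1 + i)) r +
      (W (l.nodes + 1) - W l.rootLabel) *
        ∑ i ∈ range l.nodes, (v (i + 1) - lodayFun α l (i + 1)) +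
      (W (l.nodes + 1) - W (l.nodes + 1 + r.rootLabel)) *
        ∑ i ∈ range r.nodes, (v (l.nodes + 1 + (i + 1)) - lodayFun α r (i + 1)) := by
  have hl : ∑ i ∈ range l.nodes,
      (W (l.nodes + 1) - W (i + 1)) * (v (i + 1) - lodayFun α (node l r) (i + 1)) =
      gap α W v l + (W (l.nodes + 1) - W l.rootLabel) *
        ∑ i ∈ range l.nodes, (v (i + 1) - lodayFun α l (i + 1)) := by
    rw [gap, mul_sum, ← sum_add_distrib]
    refine sum_congr rfl fun i hi => ?_
    rw [lodayFun_node_of_le (by simp at hi; omega)]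
    ring
  have hr : ∑ i ∈ range r.nodes, (W (l.nodes + 1) - W (l.nodes + 1 + (i + 1))) *
      (v (l.nodes + 1 + (i + 1)) - lodayFun α (node l r) (l.nodes + 1 + (i + 1))) =
      gap α (fun i => W (l.nodes + 1 + i)) (fun i => v (l.nodes + 1 + i)) r +
      (W (l.nodes + 1) - W (l.nodes + 1 + r.rootLabel)) *
        ∑ i ∈ range r.nodes, (v (l.nodes + 1 + (i + 1)) - lodayFun α r (i + 1)) := by
    rw [gap, mul_sum, ← sum_add_distrib]
    refine sum_congr rfl fun i _ => ?_
    rw [lodayFun_node_right (by omega)]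
    ring
  rw [gap, rootLabel, sum_range_nodes_node
    (fun k => (W (l.nodes + 1) - W k) * (v k - lodayFun α (node l r) k)), hl, hr, sub_self,
    zero_mul, add_zero]
  ring

lemma mul_sum_sub_lodayFun_nonneg {S : PBTree} {v : ℕ → ℝ} {x y : ℝ}
    (hxy : S ≠ leaf → y < x) (hv : IntervalSumsGE α S.nodes v) :
    0 ≤ (x - y) * ∑ i ∈ range S.nodes, (v (i + 1) - lodayFun α S (i + 1)) := by
  rcases eq_or_ne S leaf with rfl | hS
  · simp [nodes]
  refine mul_nonneg (sub_nonneg.2 (hxy hS).le) ?_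
  rw [sum_sub_distrib, sum_lodayFun, sub_nonneg]
  simpa using hv 0 S.nodes (by omega)

lemma sum_eq_psum_of_mul_sum_sub_lodayFun_eq_zero {S : PBTree} {v : ℕ → ℝ} {x y : ℝ}
    (hxy : S ≠ leaf → y < x)
    (h : (x - y) * ∑ i ∈ range S.nodes, (v (i + 1) - lodayFun α S (i + 1)) = 0) :
    ∑ i ∈ range S.nodes, v (i + 1) = psum α S.nodes := by
  rcases eq_or_ne S leaf with rfl | hS
  · simp [nodes, psum_zero]
  rw [sum_sub_distrib, sum_lodayFun] at h
  linarith [(mul_eq_zero.1 h).resolve_left (sub_ne_zero.2 (hxy hS).ne')]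

lemma gap_nonneg : ∀ (T : PBTree) {W v : ℕ → ℝ}, IncreasesToRoot T W →
    IntervalSumsGE α T.nodes v → 0 ≤ gap α W v T
  | leaf, _, _, _, _ => by simp [gap, nodes]
  | node l r, W, v, hW, hv => by
    rw [nodes_node] at hv
    have hvr := (hv.mono (M := l.nodes + 1 + r.nodes) (by omega)).shift (l.nodes + 1)
    rw [gap_node]
    linarith [gap_nonneg l hW.left (hv.mono (by omega)), gap_nonneg r hW.right hvr,
      mul_sum_sub_lodayFun_nonneg hW.rootLabel_left (hv.mono (by omega)),
      mul_sum_sub_lodayFun_nonneg hW.rootLabel_right hvr]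

lemma nodes_eq_of_sum_lodayFun_eq_psum {N : ℕ} (hα : StrictMonoOn α (Set.Icc 1 N))
    {l r : PBTree} (hN : (node l r).nodes ≤ N) {L R : ℕ} (hLR : L + R = l.nodes + r.nodes)
    (hL : ∑ i ∈ range L, lodayFun α (node l r) (i + 1) = psum α L)
    (hR : ∑ i ∈ range R, lodayFun α (node l r) (L + 1 + (i + 1)) = psum α R) :
    L = l.nodes := by
  rcases lt_trichotomy L l.nodes with hlt | heq | hgt
  · obtain ⟨p, hp⟩ : ∃ p, L + 1 + p = l.nodes := ⟨l.nodes - (L + 1), by omega⟩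
    obtain ⟨q, rfl⟩ : ∃ q, R = p + 1 + q := ⟨R - (p + 1), by omega⟩
    have := psum_lt_sum_lodayFun_node hα hN hp (q := q) (by omega) (Or.inl (by omega))
    simp only [← add_assoc] at hR
    linarith
  · exact heq
  · obtain ⟨q, rfl⟩ : ∃ q, L = l.nodes + 1 + q := ⟨L - (l.nodes + 1), by omega⟩
    have := psum_lt_sum_lodayFun_node hα hN (a := 0) (zero_add _) (q := q) (by omega)
      (Or.inr (by omega))
    simp only [zero_add] at this
    linarith

theorem eq_of_gap_lodayFun_eq_zero {N : ℕ} (hα : StrictMonoOn α (Set.Icc 1 N)) :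
    ∀ (T T' : PBTree) {W : ℕ → ℝ}, T'.nodes ≤ N → T.nodes = T'.nodes → IncreasesToRoot T W →
      gap α W (lodayFun α T') T = 0 → T = T'
  | leaf, leaf, _, _, _, _, _ => rfl
  | leaf, node _ _, _, _, hn, _, _ | node _ _, leaf, _, _, hn, _, _ => by
    simp [nodes] at hn
  | node l r, node l' r', W, hN, hn, hW, h0 => by
    set v := lodayFun α (node l' r')
    have hv := intervalSumsGE_lodayFun hα.monotoneOn _ hN
    rw [← hn, nodes_node] at hv
    rw [nodes_node, nodes_node] at hn
    rw [nodes_node] at hN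
    have hvr := (hv.mono (M := l.nodes + 1 + r.nodes) (by omega)).shift (l.nodes + 1)
    have hgl := gap_nonneg l hW.left (hv.mono (by omega))
    have hgr := gap_nonneg r hW.right hvr
    have hel := mul_sum_sub_lodayFun_nonneg hW.rootLabel_left (hv.mono (by omega))
    have her := mul_sum_sub_lodayFun_nonneg hW.rootLabel_right hvr
    rw [gap_node] at h0
    have hL := sum_eq_psum_of_mul_sum_sub_lodayFun_eq_zero hW.rootLabel_left (by linarith)
    have hR := sum_eq_psum_of_mul_sum_sub_lodayFun_eq_zero (v := fun i => v (l.nodes + 1 + i))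
      hW.rootLabel_right (by linarith)
    have hsize := nodes_eq_of_sum_lodayFun_eq_psum hα hN (by omega) hL hR
    have hl : l = l' := by
      refine eq_of_gap_lodayFun_eq_zero hα l l' (by omega) hsize hW.left ?_
      rw [← gap_congr fun i hi => lodayFun_node_of_le (r := r') (by omega)]
      linarith
    have hr : r = r' := by
      refine eq_of_gap_lodayFun_eq_zero hα r r' (by omega) (by omega) hW.right ?_
      rw [← gap_congr (v := fun i => v (l.nodes + 1 + i)) fun i _ => by
        rw [hsize]; exact lodayFun_node_right (Nat.succ_pos i)]
      linarith
    rw [hl, hr]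

end PBTree

open PBTree

/-- Corollary 4.9: for a strictly increasing `α ∈ ℝ^n`, two plane binary trees `T`, `T'` with
`n` internal nodes, and any `w ∈ ℝ^n` with `w_i < w_j` whenever the internal node labeled `i`
is a child of the one labeled `j` in `T`, one has `⟨w, v_{T'}^α⟩ ≤ ⟨w, v_T^α⟩`, with equality
iff `T = T'`. -/
theorem loday_vertex_maximizes (n : ℕ) (α : ℕ → ℝ)
    (hα : ∀ i j : ℕ, 1 ≤ i → i < j → j ≤ n → α i < α j)
    (T T' : PBTree) (hT : T.nodes = n) (hT' : T'.nodes = n)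
    (w : Fin n → ℝ)
    (hw : ∀ i j : Fin n, T.childOf (i.1 + 1) (j.1 + 1) → w i < w j) :
    (∑ i, w i * lodayVec n α T' i) ≤ (∑ i, w i * lodayVec n α T i) ∧
    ((∑ i, w i * lodayVec n α T i) = (∑ i, w i * lodayVec n α T' i) ↔ T = T') := by
  have hα' : StrictMonoOn α (Set.Icc 1 n) := fun i hi j hj hij => hα i j hi.1 hij hj.2
  let W : ℕ → ℝ := fun i => if h : i - 1 < n then w ⟨i - 1, h⟩ else 0
  have hW : IncreasesToRoot T W := fun i j h => by
    obtain ⟨hi, hin, hj, hjn⟩ := childOf_bounds h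
    have := hw ⟨i - 1, by omega⟩ ⟨j - 1, by omega⟩ (by rwa [Nat.sub_add_cancel hi,
      Nat.sub_add_cancel hj])
    simpa [W, show i - 1 < n by omega, show j - 1 < n by omega] using this
  have hsum (U : PBTree) : ∑ i, w i * lodayVec n α U i =
      ∑ i ∈ range n, W (i + 1) * lodayFun α U (i + 1) := by
    rw [← Fin.sum_univ_eq_sum_range (fun i => W (i + 1) * lodayFun α U (i + 1))]
    simp [W, lodayVec, lodayFun]
  have hgap : ∑ i, w i * lodayVec n α T i - ∑ i, w i * lodayVec n α T' i =
      gap α W (lodayFun α T') T := by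
    rw [hsum, hsum, gap_eq_sub (by rw [hT, ← hT', sum_lodayFun]), hT]
  have hv : IntervalSumsGE α T.nodes (lodayFun α T') := by
    rw [hT, ← hT']
    exact intervalSumsGE_lodayFun hα'.monotoneOn T' hT'.le
  refine ⟨by linarith [gap_nonneg T hW hv], fun h => ?_, by rintro rfl; rfl⟩
  exact eq_of_gap_lodayFun_eq_zero hα' T T' hT'.le (hT.trans hT'.symm) hW (by linarith)
end

section
/- Let α = (α_1,…,α_{d+1}) ∈ ℝ^{d+1} be strictly increasing, and set δ_k := α_k − α_{k−1} for k = 1,…,d+1 (with the convention α_0 = 0). Then convexHull{ v_T^α : T a plane binary tree with d+1 internal nodes } = δ_{d+1}·Δ_{[d+1]} + Σ_{I} δ_{|I|}·Δ_I, where the (Minkowski) sum runs over all integer intervals I with ∅ ≠ I ⊊ [d+1], and Δ_I := convexHull{ e_i : i ∈ I } ⊆ ℝ^{d+1} with e_1,…,e_{d+1} the standard basis. -/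
open scoped Pointwise

/-- The simplex `Δ_I = conv{e_i : i ∈ I}` for the integer interval `I = {a,…,b} ⊆ [d+1]`
(labels are 1-based; coordinate `i : Fin (d+1)` has label `i+1`). -/
def intervalSimplex (d a b : ℕ) : Set (Fin (d + 1) → ℝ) :=
  convexHull ℝ {x | ∃ i : Fin (d + 1), (a ≤ i.1 + 1 ∧ i.1 + 1 ≤ b) ∧ x = Pi.single i 1}

open Finset

namespace PBTree

/-- For `1 ≤ a ≤ b ≤ T.nodes`, the label of the root of the smallest subtree of `T` containing
all the internal nodes labeled `a, …, b`. -/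
def intervalRoot : PBTree → ℕ → ℕ → ℕ
  | leaf, _, _ => 0
  | node l r, a, b =>
      if a ≤ l.nodes + 1 ∧ l.nodes + 1 ≤ b then l.nodes + 1
      else if b ≤ l.nodes then intervalRoot l a b
      else l.nodes + 1 + intervalRoot r (a - (l.nodes + 1)) (b - (l.nodes + 1))

theorem intervalRoot_mem_Icc (T : PBTree) {a b : ℕ} (ha : 1 ≤ a) (hab : a ≤ b)
    (hb : b ≤ T.nodes) : a ≤ T.intervalRoot a b ∧ T.intervalRoot a b ≤ b := by
  induction T generalizing a b with
  | leaf => simp only [nodes] at hb; omega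
  | node l r ihl ihr =>
    simp only [nodes] at hb
    rw [intervalRoot]
    split_ifs with hmid hleft
    · omega
    · exact ihl ha hab hleft
    · have := ihr (a := a - (l.nodes + 1)) (b := b - (l.nodes + 1)) (by omega) (by omega)
        (by omega)
      omega

theorem finite_setOf_nodes_eq (n : ℕ) : {T : PBTree | T.nodes = n}.Finite := by
  induction n using Nat.strong_induction_on with
  | _ n ih =>
    cases n with
    | zero =>
      refine (Set.finite_singleton leaf).subset ?_
      rintro (_ | ⟨l, r⟩) hT <;> simp_all [nodes]
    | succ n =>
      refine ((finite_toSet (range (n + 1))).biUnion fun k hk =>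
        (ih k (mem_range.1 (mem_coe.1 hk))).image2 node (ih (n - k) (by omega))).subset ?_
      rintro (_ | ⟨l, r⟩) hT <;> simp only [Set.mem_ofPred_eq, nodes] at hT
      · omega
      · exact Set.mem_biUnion (x := l.nodes) (by simp only [coe_range, Set.mem_Iio]; omega)
          (Set.mem_image2_of_mem rfl (by simp only [Set.mem_ofPred_eq]; omega))

theorem exists_nodes_eq_forall_le_intervalRoot (n : ℕ) (w : ℕ → ℝ) :
    ∃ T : PBTree, T.nodes = n ∧ ∀ a b k, 1 ≤ a → a ≤ k → k ≤ b → b ≤ n →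
      w k ≤ w (T.intervalRoot a b) := by
  induction n using Nat.strong_induction_on generalizing w with
  | _ n ih =>
    cases n with
    | zero => exact ⟨leaf, rfl, by omega⟩
    | succ n =>
      obtain ⟨m, hm, hmax⟩ := (Icc 1 (n + 1)).exists_max_image w ⟨1, by simp⟩
      rw [mem_Icc] at hm
      obtain ⟨l, hl, hlw⟩ := ih (m - 1) (by omega) w
      obtain ⟨r, hr, hrw⟩ := ih (n + 1 - m) (by omega) (fun k => w (k + m))
      refine ⟨node l r, by simp only [nodes]; omega, fun a b k ha hak hkb hb => ?_⟩
      rw [intervalRoot, hl, Nat.sub_add_cancel hm.1]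
      split_ifs with hmid hleft
      · exact hmax k (mem_Icc.2 ⟨by omega, by omega⟩)
      · exact hlw a b k ha hak hkb hleft
      · have := hrw (a - m) (b - m) (k - m) (by omega) (by omega) (by omega) (by omega)
        rwa [Nat.sub_add_cancel (by omega), add_comm] at this

end PBTree

def labelIntervals (n : ℕ) : Finset (ℕ × ℕ) :=
  (Icc 1 n ×ˢ Icc 1 n).filter fun p => p.1 ≤ p.2

/-- The weight `δ_{|I|} = α_{|I|} - α_{|I|-1}` of the label interval `I = [p.1, p.2]`. -/
def intervalWeight (α : ℕ → ℝ) (p : ℕ × ℕ) : ℝ :=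
  α (p.2 - p.1 + 1) - α (p.2 - p.1)

theorem sum_Icc_telescope_down (α : ℕ → ℝ) {c m : ℕ} (h : m ≤ c) :
    ∑ a ∈ Icc 1 m, (α (c - a + 1) - α (c - a)) = α c - α (c - m) := by
  induction m with
  | zero => simp
  | succ m ih =>
    rw [sum_Icc_succ_top (by omega), ih (by omega), show c - (m + 1) + 1 = c - m by omega]
    ring

theorem sum_intervalWeight_Icc_prod_Icc (α : ℕ → ℝ) (hα0 : α 0 = 0) (L R : ℕ) :
    ∑ p ∈ Icc 1 (L + 1) ×ˢ Icc (L + 1) (L + R + 1), intervalWeight α p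
      = ∑ k ∈ Icc 1 (L + R + 1), α k - ∑ k ∈ Icc 1 L, α k - ∑ k ∈ Icc 1 R, α k := by
  rw [sum_product_right]
  induction R with
  | zero =>
    rw [add_zero, Icc_self, sum_singleton]
    simp only [intervalWeight]
    rw [sum_Icc_telescope_down α le_rfl, Nat.sub_self, hα0, sum_Icc_succ_top (by omega) α]
    simp
  | succ R ih =>
    rw [show L + (R + 1) + 1 = L + R + 1 + 1 by ring, sum_Icc_succ_top (by omega), ih,
      sum_Icc_succ_top (show 1 ≤ L + R + 1 + 1 by omega) α,
      sum_Icc_succ_top (show 1 ≤ R + 1 by omega) α]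
    simp only [intervalWeight]
    rw [sum_Icc_telescope_down α (by omega), show L + R + 1 + 1 - (L + 1) = R + 1 by omega]
    ring

namespace PBTree

def intervalsWithRoot (T : PBTree) (i : ℕ) : Finset (ℕ × ℕ) :=
  (labelIntervals T.nodes).filter fun p => T.intervalRoot p.1 p.2 = i

theorem intervalsWithRoot_node_of_le {l r : PBTree} {i : ℕ} (hi : i ≤ l.nodes) :
    (node l r).intervalsWithRoot i = l.intervalsWithRoot i := by
  ext ⟨a, b⟩
  simp only [intervalsWithRoot, labelIntervals, nodes, mem_filter, mem_product, mem_Icc]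
  simp only [intervalRoot]
  split_ifs <;> omega

theorem intervalsWithRoot_node_self (l r : PBTree) :
    (node l r).intervalsWithRoot (l.nodes + 1)
      = Icc 1 (l.nodes + 1) ×ˢ Icc (l.nodes + 1) (l.nodes + r.nodes + 1) := by
  ext ⟨a, b⟩
  simp only [intervalsWithRoot, labelIntervals, nodes, mem_filter, mem_product, mem_Icc]
  simp only [intervalRoot]
  split_ifs with hmid hleft
  · omega
  · have := l.intervalRoot_mem_Icc (a := a) (b := b)
    omega
  · have := r.intervalRoot_mem_Icc (a := a - (l.nodes + 1)) (b := b - (l.nodes + 1))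
    omega

theorem intervalsWithRoot_node_of_lt {l r : PBTree} {i : ℕ} (hi : l.nodes + 1 < i) :
    (node l r).intervalsWithRoot i = (r.intervalsWithRoot (i - (l.nodes + 1))).image
      fun q => (q.1 + (l.nodes + 1), q.2 + (l.nodes + 1)) := by
  ext ⟨a, b⟩
  simp only [intervalsWithRoot, labelIntervals, nodes, mem_image, mem_filter, mem_product,
    mem_Icc, Prod.exists, Prod.mk.injEq]
  simp only [intervalRoot]
  constructor
  · rintro ⟨⟨⟨⟨ha, -⟩, -, hb⟩, hab⟩, hroot⟩
    split_ifs at hroot with hmid hleft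
    · omega
    · have := l.intervalRoot_mem_Icc ha hab hleft
      omega
    · exact ⟨a - (l.nodes + 1), b - (l.nodes + 1), by omega⟩
  · rintro ⟨a, b, ⟨⟨⟨⟨ha, -⟩, -, hb⟩, hab⟩, hroot⟩, rfl, rfl⟩
    rw [if_neg (by omega), if_neg (by omega), Nat.add_sub_cancel, Nat.add_sub_cancel, hroot]
    omega

theorem val_subtreeAt_eq_sum_intervalWeight (α : ℕ → ℝ) (hα0 : α 0 = 0) (T : PBTree) {i : ℕ}
    (hi : 1 ≤ i) (hiT : i ≤ T.nodes) :
    val α (T.subtreeAt i) = ∑ p ∈ T.intervalsWithRoot i, intervalWeight α p := by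
  induction T generalizing i with
  | leaf => simp only [nodes] at hiT; omega
  | node l r ihl ihr =>
    simp only [nodes] at hiT
    rcases lt_trichotomy i (l.nodes + 1) with hil | rfl | hir
    · rw [subtreeAt, if_neg (by omega), if_pos (by omega), ihl hi (by omega),
        intervalsWithRoot_node_of_le (by omega)]
    · rw [subtreeAt, if_pos rfl, val, intervalsWithRoot_node_self,
        sum_intervalWeight_Icc_prod_Icc α hα0]
    · rw [subtreeAt, if_neg (by omega), if_neg (by omega), ihr (by omega) (by omega),
        intervalsWithRoot_node_of_lt hir, sum_image fun q _ q' _ h => by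
          simp only [Prod.mk.injEq] at h; ext <;> omega]
      simp only [intervalWeight, Nat.add_sub_add_right]

end PBTree

theorem mem_convexHull_of_forall_exists_apply_le {E : Type*} [TopologicalSpace E] [AddCommGroup E]
    [Module ℝ E] [IsTopologicalAddGroup E] [ContinuousSMul ℝ E] [LocallyConvexSpace ℝ E]
    [T2Space E] {s : Set E} (hs : s.Finite) {x : E}
    (h : ∀ f : StrongDual ℝ E, ∃ y ∈ s, f x ≤ f y) : x ∈ convexHull ℝ s := by
  by_contra hx
  obtain ⟨f, u, hfs, hfx⟩ := geometric_hahn_banach_closed_point (convex_convexHull ℝ s)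
    (hs.isClosed_convexHull ℝ) hx
  obtain ⟨y, hy, hxy⟩ := h f
  linarith [hfs y (subset_convexHull ℝ s hy)]

/-- The standard basis vector with 1-based label `k` (zero if `k ∉ [1, d+1]`). -/
def unitVec (d k : ℕ) : Fin (d + 1) → ℝ := fun i => if i.1 + 1 = k then 1 else 0

theorem unitVec_succ {d : ℕ} (i : Fin (d + 1)) : unitVec d (i.1 + 1) = Pi.single i 1 := by
  ext j
  simp [unitVec, Pi.single_apply, Fin.ext_iff]

def intervalVertices (d a b : ℕ) : Set (Fin (d + 1) → ℝ) :=
  {x | ∃ i : Fin (d + 1), (a ≤ i.1 + 1 ∧ i.1 + 1 ≤ b) ∧ x = Pi.single i 1}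

theorem unitVec_mem_intervalVertices {d a b k : ℕ} (hak : a ≤ k) (hkb : k ≤ b) (hk : 1 ≤ k)
    (hkd : k ≤ d + 1) : unitVec d k ∈ intervalVertices d a b :=
  ⟨⟨k - 1, by omega⟩, by simp only; omega, by rw [← unitVec_succ]; congr 1; simp only; omega⟩

theorem lodayVec_eq_sum_intervalWeight_smul_unitVec {d : ℕ} {α : ℕ → ℝ} (hα0 : α 0 = 0)
    {T : PBTree} (hT : T.nodes = d + 1) :
    lodayVec (d + 1) α T = ∑ p ∈ labelIntervals (d + 1),
      intervalWeight α p • unitVec d (T.intervalRoot p.1 p.2) := by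
  ext i
  rw [lodayVec, PBTree.val_subtreeAt_eq_sum_intervalWeight α hα0 T (by omega) (by omega),
    PBTree.intervalsWithRoot, hT, sum_filter, Finset.sum_apply]
  refine sum_congr rfl fun p _ => ?_
  simp only [Pi.smul_apply, unitVec, smul_eq_mul, mul_ite, mul_one, mul_zero, eq_comm]

theorem lodayVec_mem_sum_smul_intervalVertices {d : ℕ} {α : ℕ → ℝ} (hα0 : α 0 = 0)
    {T : PBTree} (hT : T.nodes = d + 1) :
    lodayVec (d + 1) α T ∈ ∑ p ∈ labelIntervals (d + 1),
      intervalWeight α p • intervalVertices d p.1 p.2 := by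
  rw [lodayVec_eq_sum_intervalWeight_smul_unitVec hα0 hT]
  refine Set.finsetSum_mem_finsetSum _ _ _ fun p hp => Set.smul_mem_smul_set ?_
  simp only [labelIntervals, mem_filter, mem_product, mem_Icc] at hp
  have := T.intervalRoot_mem_Icc hp.1.1.1 hp.2 (by omega)
  exact unitVec_mem_intervalVertices this.1 this.2 (by omega) (by omega)

theorem intervalWeight_nonneg {n : ℕ} {α : ℕ → ℝ} (hα : MonotoneOn α (Set.Icc 1 n))
    {p : ℕ × ℕ} (hp : p ∈ labelIntervals n) (hne : p.1 ≠ p.2) : 0 ≤ intervalWeight α p := by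
  simp only [labelIntervals, mem_filter, mem_product, mem_Icc] at hp
  exact sub_nonneg.2 (hα ⟨by omega, by omega⟩ ⟨by omega, by omega⟩ (by omega))

theorem finite_setOf_lodayVec (d : ℕ) (α : ℕ → ℝ) :
    {x | ∃ T : PBTree, T.nodes = d + 1 ∧ x = lodayVec (d + 1) α T}.Finite :=
  ((PBTree.finite_setOf_nodes_eq (d + 1)).image (lodayVec (d + 1) α)).subset
    (by rintro _ ⟨T, hT, rfl⟩; exact ⟨T, hT, rfl⟩)

theorem sum_smul_intervalVertices_subset_convexHull_lodayVec {d : ℕ} {α : ℕ → ℝ}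
    (hα0 : α 0 = 0) (hα : MonotoneOn α (Set.Icc 1 (d + 1))) :
    ∑ p ∈ labelIntervals (d + 1), intervalWeight α p • intervalVertices d p.1 p.2
      ⊆ convexHull ℝ {x | ∃ T : PBTree, T.nodes = d + 1 ∧ x = lodayVec (d + 1) α T} := by
  intro x hx
  obtain ⟨g, hg, rfl⟩ := (Set.mem_finsetSum _ _ _).1 hx
  refine mem_convexHull_of_forall_exists_apply_le (finite_setOf_lodayVec d α) fun f => ?_
  obtain ⟨T, hT, hmax⟩ :=
    PBTree.exists_nodes_eq_forall_le_intervalRoot (d + 1) (fun k => f (unitVec d k))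
  refine ⟨_, ⟨T, hT, rfl⟩, ?_⟩
  rw [lodayVec_eq_sum_intervalWeight_smul_unitVec hα0 hT, map_sum, map_sum]
  refine sum_le_sum fun p hp => ?_
  obtain ⟨_, ⟨i, ⟨hai, hib⟩, rfl⟩, hgp⟩ := hg hp
  rw [← hgp, map_smul, map_smul, ← unitVec_succ, smul_eq_mul, smul_eq_mul]
  have hp' := hp
  simp only [labelIntervals, mem_filter, mem_product, mem_Icc] at hp'
  rcases eq_or_ne p.1 p.2 with heq | hne
  · have := T.intervalRoot_mem_Icc hp'.1.1.1 hp'.2 (by omega)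
    rw [show T.intervalRoot p.1 p.2 = i.1 + 1 by omega]
  · exact mul_le_mul_of_nonneg_left (hmax _ _ _ (by omega) hai hib (by omega))
      (intervalWeight_nonneg hα hp hne)

theorem smul_intervalSimplex_add_sum_eq_convexHull (d : ℕ) (α : ℕ → ℝ) :
    (α (d + 1) - α d) • intervalSimplex d 1 (d + 1)
        + ∑ p ∈ (Finset.Icc 1 (d + 1) ×ˢ Finset.Icc 1 (d + 1)).filter
            (fun p : ℕ × ℕ => p.1 ≤ p.2 ∧ ¬(p.1 = 1 ∧ p.2 = d + 1)),
          (α (p.2 - p.1 + 1) - α (p.2 - p.1)) • intervalSimplex d p.1 p.2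
      = convexHull ℝ (∑ p ∈ labelIntervals (d + 1),
          intervalWeight α p • intervalVertices d p.1 p.2) := by
  have hmem : (1, d + 1) ∈ labelIntervals (d + 1) := by simp [labelIntervals]
  have herase : (Finset.Icc 1 (d + 1) ×ˢ Finset.Icc 1 (d + 1)).filter
      (fun p : ℕ × ℕ => p.1 ≤ p.2 ∧ ¬(p.1 = 1 ∧ p.2 = d + 1))
        = (labelIntervals (d + 1)).erase (1, d + 1) := by
    ext ⟨a, b⟩
    simp only [labelIntervals, mem_erase, mem_filter, ne_eq, Prod.mk.injEq]
    tauto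
  rw [convexHull_sum, ← add_sum_erase _ _ hmem, herase]
  simp only [convexHull_smul, intervalWeight]
  rfl

/-- Corollary 4.15: the Minkowski sum decomposition of the Loday associahedron,
`LodAsso(α) = δ_{d+1} Δ_{[d+1]} + Σ_{I} δ_{|I|} Δ_I`, summed over all integer intervals
`∅ ≠ I ⊊ [d+1]`, where `δ_k = α_k − α_{k−1}` (with `α_0 = 0`). -/
theorem loday_minkowski (d : ℕ) (α : ℕ → ℝ) (hα0 : α 0 = 0)
    (hα : ∀ i j : ℕ, 1 ≤ i → i < j → j ≤ d + 1 → α i < α j) :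
    convexHull ℝ {x : Fin (d + 1) → ℝ | ∃ T : PBTree, T.nodes = d + 1 ∧ x = lodayVec (d + 1) α T}
      = (α (d + 1) - α d) • intervalSimplex d 1 (d + 1)
        + ∑ p ∈ (Finset.Icc 1 (d + 1) ×ˢ Finset.Icc 1 (d + 1)).filter
            (fun p : ℕ × ℕ => p.1 ≤ p.2 ∧ ¬(p.1 = 1 ∧ p.2 = d + 1)),
          (α (p.2 - p.1 + 1) - α (p.2 - p.1)) • intervalSimplex d p.1 p.2 := by
  have hmono : MonotoneOn α (Set.Icc 1 (d + 1)) := fun i hi j hj hij =>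
    hij.eq_or_lt.elim (fun h => h ▸ le_rfl) fun h => (hα i j hi.1 h hj.2).le
  rw [smul_intervalSimplex_add_sum_eq_convexHull]
  refine subset_antisymm (convexHull_min ?_ (convex_convexHull ℝ _))
    (convexHull_min (sum_smul_intervalVertices_subset_convexHull_lodayVec hα0 hmono)
      (convex_convexHull ℝ _))
  rintro _ ⟨T, hT, rfl⟩
  exact subset_convexHull ℝ _ (lodayVec_mem_sum_smul_intervalVertices hα0 hT)
end

section
/- For every d ≥ 1, the nested braid cones σ(π,τ), as (π,τ) ranges over all pairs of a permutation π of [d+1] and a permutation τ of [d], cover ℝ^{d+1} (i.e., their union is ℝ^{d+1}), and for distinct pairs (π,τ) ≠ (π',τ') the open parts σ°(π,τ) and σ°(π',τ') are disjoint. -/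
/-- `D^π_i w := w_{π⁻¹(i+1)} − w_{π⁻¹(i)}` for `i = 1,…,d` (here `i : Fin d`,
so `i.castSucc` plays the role of `i` and `i.succ` that of `i+1`). -/
def Dpi {d : ℕ} (π : Equiv.Perm (Fin (d + 1))) (i : Fin d) (w : Fin (d + 1) → ℝ) : ℝ :=
  w (π.symm i.succ) - w (π.symm i.castSucc)

/-- The nested braid cone
`σ(π,τ) = {w : 0 ≤ D^π_{τ⁻¹(1)} w ≤ D^π_{τ⁻¹(2)} w ≤ … ≤ D^π_{τ⁻¹(d)} w}`. -/
def nestedBraidCone (d : ℕ) (π : Equiv.Perm (Fin (d + 1))) (τ : Equiv.Perm (Fin d)) :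
    Set (Fin (d + 1) → ℝ) :=
  {w | (∀ i : Fin d, 0 ≤ Dpi π (τ.symm i) w) ∧ Monotone fun i => Dpi π (τ.symm i) w}

/-- The open part of `σ(π,τ)`, given by the same chain with strict inequalities. -/
def nestedBraidConeOpen (d : ℕ) (π : Equiv.Perm (Fin (d + 1))) (τ : Equiv.Perm (Fin d)) :
    Set (Fin (d + 1) → ℝ) :=
  {w | (∀ i : Fin d, 0 < Dpi π (τ.symm i) w) ∧ StrictMono fun i => Dpi π (τ.symm i) w}

/-!
`w ∈ σ(π,τ)` says exactly that `π⁻¹` sorts the coordinates of `w` and that `τ⁻¹` then sorts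
the gaps `D^π_i w` between consecutive sorted coordinates. Sorting always succeeds, which gives
the covering; in the open part both sorts are strict, and a strictly sorting permutation is
unique, which gives the disjointness.
-/

theorem Tuple.eq_sort_of_strictMono {α : Type*} [LinearOrder α] {n : ℕ} {f : Fin n → α}
    {σ : Equiv.Perm (Fin n)} (h : StrictMono (f ∘ σ)) : σ = Tuple.sort f :=
  Tuple.eq_sort_iff.2 ⟨h.monotone, fun _ _ hij hf => absurd hf (h hij).ne⟩

section Dpi

variable {d : ℕ} (π : Equiv.Perm (Fin (d + 1))) (w : Fin (d + 1) → ℝ)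

theorem forall_Dpi_nonneg_iff : (∀ i, 0 ≤ Dpi π i w) ↔ Monotone (w ∘ π.symm) := by
  simp only [Fin.monotone_iff_le_succ, Dpi, sub_nonneg, Function.comp_apply]

theorem forall_Dpi_pos_iff : (∀ i, 0 < Dpi π i w) ↔ StrictMono (w ∘ π.symm) := by
  simp only [Fin.strictMono_iff_lt_succ, Dpi, sub_pos, Function.comp_apply]

end Dpi

section NestedBraidCone

variable {d : ℕ} {π : Equiv.Perm (Fin (d + 1))} {τ : Equiv.Perm (Fin d)} {w : Fin (d + 1) → ℝ}

theorem mem_nestedBraidCone_iff : w ∈ nestedBraidCone d π τ ↔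
    Monotone (w ∘ π.symm) ∧ Monotone ((Dpi π · w) ∘ τ.symm) := by
  rw [← forall_Dpi_nonneg_iff, ← τ.symm.forall_congr_right]
  rfl

theorem mem_nestedBraidConeOpen_iff : w ∈ nestedBraidConeOpen d π τ ↔
    StrictMono (w ∘ π.symm) ∧ StrictMono ((Dpi π · w) ∘ τ.symm) := by
  rw [← forall_Dpi_pos_iff, ← τ.symm.forall_congr_right]
  rfl

theorem mem_nestedBraidCone_sort (w : Fin (d + 1) → ℝ) :
    w ∈ nestedBraidCone d (Tuple.sort w)⁻¹ (Tuple.sort (Dpi (Tuple.sort w)⁻¹ · w))⁻¹ :=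
  mem_nestedBraidCone_iff.2 ⟨Tuple.monotone_sort w, Tuple.monotone_sort _⟩

theorem symm_eq_sort_of_mem_nestedBraidConeOpen (hw : w ∈ nestedBraidConeOpen d π τ) :
    π.symm = Tuple.sort w ∧ τ.symm = Tuple.sort (Dpi π · w) :=
  have hw := mem_nestedBraidConeOpen_iff.1 hw
  ⟨Tuple.eq_sort_of_strictMono hw.1, Tuple.eq_sort_of_strictMono hw.2⟩

end NestedBraidCone

theorem nested_braid_cones_dissect_general (d : ℕ) :
    (⋃ p : Equiv.Perm (Fin (d + 1)) × Equiv.Perm (Fin d),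
        nestedBraidCone d p.1 p.2) = Set.univ ∧
    ∀ p q : Equiv.Perm (Fin (d + 1)) × Equiv.Perm (Fin d), p ≠ q →
      Disjoint (nestedBraidConeOpen d p.1 p.2) (nestedBraidConeOpen d q.1 q.2) := by
  refine ⟨Set.eq_univ_of_forall fun w => Set.mem_iUnion.2 ⟨(_, _), mem_nestedBraidCone_sort w⟩, ?_⟩
  intro p q hne
  refine Set.disjoint_left.2 fun w hw hw' => hne ?_
  obtain ⟨hπ, hτ⟩ := symm_eq_sort_of_mem_nestedBraidConeOpen hw
  obtain ⟨hπ', hτ'⟩ := symm_eq_sort_of_mem_nestedBraidConeOpen hw'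
  have h₁ : p.1 = q.1 := Equiv.symm_bijective.injective (hπ.trans hπ'.symm)
  rw [h₁] at hτ
  exact Prod.ext h₁ (Equiv.symm_bijective.injective (hτ.trans hτ'.symm))

/-- Lemma 5.13: for every `d ≥ 1` the nested braid cones `σ(π,τ)` cover `ℝ^{d+1}` and
their open parts are pairwise disjoint. -/
theorem nested_braid_cones_dissect (d : ℕ) (hd : 1 ≤ d) :
    (⋃ p : Equiv.Perm (Fin (d + 1)) × Equiv.Perm (Fin d),
        nestedBraidCone d p.1 p.2) = Set.univ ∧
    ∀ p q : Equiv.Perm (Fin (d + 1)) × Equiv.Perm (Fin d), p ≠ q →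
      Disjoint (nestedBraidConeOpen d p.1 p.2) (nestedBraidConeOpen d q.1 q.2) :=
  nested_braid_cones_dissect_general d
end

section
/- Let (α,β) ∈ ℝ^{d+1} × ℝ^d be a 𝒯-appropriate pair of strictly increasing sequences, and let (π,T) and (π',T') be pairs of a permutation of [d+1] and a plane binary tree with d internal nodes. Then for every w ∈ σ°(π,T) one has ⟨w, v_{π,T}^{(α,β)}⟩ ≥ ⟨w, v_{π',T'}^{(α,β)}⟩, with equality if and only if (π,T) = (π',T'). -/
/-- `β_{T,i} := val(β, T_(i))`, the value of the subtree of `T` rooted at the internal node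
labeled `i`.  (For `i = 0` or `i` out of range this is `0`, which encodes the convention
`β_{T,0} = β_{T,d+1} = 0`.) -/
def betaT (β : ℕ → ℝ) (T : PBTree) (i : ℕ) : ℝ :=
  PBTree.val β (T.subtreeAt i)

/-- The vertex candidate
`v_{π,T}^{(α,β)} := Σ_{i=1}^{d+1} α_i e_{π⁻¹(i)} + Σ_{i=1}^{d} β_{T,i}(e_{π⁻¹(i+1)} − e_{π⁻¹(i)})`. -/
def vPT (d : ℕ) (α β : ℕ → ℝ) (π : Equiv.Perm (Fin (d + 1))) (T : PBTree) :
    Fin (d + 1) → ℝ :=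
  (∑ i : Fin (d + 1), α (i.1 + 1) • (Pi.single (π.symm i) (1 : ℝ) : Fin (d + 1) → ℝ))
    + ∑ i : Fin d, betaT β T (i.1 + 1) •
        ((Pi.single (π.symm i.succ) (1 : ℝ) : Fin (d + 1) → ℝ)
          - (Pi.single (π.symm i.castSucc) (1 : ℝ) : Fin (d + 1) → ℝ))

/-- The pair `(α, β)` is `𝒯`-appropriate: `α` and `β` are strictly increasing (on the relevant
index windows `[1,d+1]` and `[1,d]`), and for every plane binary tree `T` with `d` internal
nodes the quantities `α_i + β_{T,i−1} − β_{T,i}` are strictly increasing for `i = 1,…,d+1`. -/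
def TAppropriate (d : ℕ) (α β : ℕ → ℝ) : Prop :=
  (∀ i j : ℕ, 1 ≤ i → i < j → j ≤ d + 1 → α i < α j) ∧
  (∀ i j : ℕ, 1 ≤ i → i < j → j ≤ d → β i < β j) ∧
  ∀ T : PBTree, T.nodes = d → ∀ i j : ℕ, 1 ≤ i → i < j → j ≤ d + 1 →
    α i + betaT β T (i - 1) - betaT β T i < α j + betaT β T (j - 1) - betaT β T j

/-- The open part `σ°(π,T)`: all `D^π_i w > 0` and `D^π_i w < D^π_j w` whenever the internal
node labeled `i` is a child of the internal node labeled `j` in `T`. -/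
def sigmaPTOpen (d : ℕ) (π : Equiv.Perm (Fin (d + 1))) (T : PBTree) : Set (Fin (d + 1) → ℝ) :=
  {w | (∀ i : Fin d, 0 < Dpi π i w) ∧
    ∀ i j : Fin d, T.childOf (i.1 + 1) (j.1 + 1) → Dpi π i w < Dpi π j w}

open Finset

theorem StrictMono.sum_mul_comp_perm_lt_sum_mul {ι R : Type*} [LinearOrder ι] [Fintype ι]
    [Semiring R] [LinearOrder R] [IsStrictOrderedRing R] [ExistsAddOfLE R] {f g : ι → R}
    (hf : StrictMono f) (hg : StrictMono g) {σ : Equiv.Perm ι} (hσ : σ ≠ 1) :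
    ∑ i, f i * g (σ i) < ∑ i, f i * g i := by
  refine (hf.monotone.monovary hg.monotone).sum_mul_comp_perm_lt_sum_mul_iff.2 fun hfgσ => hσ ?_
  have hσmono : StrictMono σ := fun i j hij => lt_of_not_ge fun hji =>
    (hf hij).not_ge (hfgσ (hg (lt_of_le_of_ne hji (σ.injective.ne hij.ne'))))
  exact Equiv.ext fun i => hσmono.apply_eq

theorem sum_mul_succ_sub_castSucc {R : Type*} [CommRing R] {d : ℕ} (b : ℕ → R)
    (u : Fin (d + 1) → R) (h0 : b 0 = 0) (hd : b (d + 1) = 0) :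
    ∑ i : Fin d, b (i + 1) * (u i.succ - u i.castSucc)
      = ∑ k : Fin (d + 1), (b k - b (k + 1)) * u k := by
  simp only [mul_sub, sub_mul, sum_sub_distrib]
  rw [Fin.sum_univ_succ (f := fun k : Fin (d + 1) => b k * u k),
    Fin.sum_univ_castSucc (f := fun k : Fin (d + 1) => b (k + 1) * u k)]
  simp [h0, hd]

def partialSum (β : ℕ → ℝ) (n : ℕ) : ℝ := ∑ k ∈ Icc 1 n, β k

lemma partialSum_add (β : ℕ → ℝ) (a m : ℕ) :
    partialSum β (a + m) = partialSum β a + ∑ j ∈ Icc 1 m, β (a + j) := by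
  induction m with
  | zero => simp
  | succ m ih =>
    rw [← add_assoc, partialSum, sum_Icc_succ_top (by omega), ← partialSum, ih,
      sum_Icc_succ_top (by omega), add_assoc, add_assoc]

lemma partialSum_sub_lt_partialSum_sub {β : ℕ → ℝ} {n a s m : ℕ}
    (hβ : StrictMonoOn β (Set.Icc 1 n)) (hs : 0 < s) (hm : 0 < m) (h : a + s + m ≤ n) :
    partialSum β (a + m) - partialSum β a < partialSum β (a + s + m) - partialSum β (a + s) := by
  rw [partialSum_add, partialSum_add, add_sub_cancel_left, add_sub_cancel_left]
  refine sum_lt_sum_of_nonempty (nonempty_Icc.2 hm) fun j hj => ?_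
  rw [mem_Icc] at hj
  exact hβ ⟨by omega, by omega⟩ ⟨by omega, by omega⟩ (by omega)

lemma partialSum_rotation_coeff_pos {β : ℕ → ℝ} (a b c : ℕ)
    (hβ : StrictMonoOn β (Set.Icc 1 (a + b + c + 2))) :
    0 < partialSum β (a + b + c + 2) + partialSum β b
      - partialSum β (a + b + 1) - partialSum β (b + c + 1) := by
  have := partialSum_sub_lt_partialSum_sub (a := b) (s := a + 1) (m := c + 1) hβ
    (by omega) (by omega) (by omega)
  rw [show b + (a + 1) + (c + 1) = a + b + c + 2 by omega,
    show b + (a + 1) = a + b + 1 by omega, ← add_assoc] at this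
  linarith

namespace PBTree

lemma val_node (β : ℕ → ℝ) (l r : PBTree) :
    val β (node l r) =
      partialSum β (l.nodes + r.nodes + 1) - partialSum β l.nodes - partialSum β r.nodes :=
  rfl

lemma eq_leaf_of_nodes_eq_zero {T : PBTree} (h : T.nodes = 0) : T = leaf := by
  cases T with
  | leaf => rfl
  | node l r => simp [nodes] at h

lemma rootLabel_mem_Icc {T : PBTree} (h : T ≠ leaf) : T.rootLabel ∈ Set.Icc 1 T.nodes := by
  cases T with
  | leaf => exact absurd rfl h
  | node l r => simp only [rootLabel, nodes, Set.mem_Icc]; omega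

lemma mem_Icc_of_childOf : ∀ {T : PBTree} {i j : ℕ}, T.childOf i j →
    i ∈ Set.Icc 1 T.nodes ∧ j ∈ Set.Icc 1 T.nodes
  | leaf, _, _, h => h.elim
  | node l r, i, j, h => by
    simp only [nodes, Set.mem_Icc]
    rcases h with ⟨rfl, ⟨hl, rfl⟩ | ⟨hr, rfl⟩⟩ | h | h
    · have := rootLabel_mem_Icc hl; simp only [Set.mem_Icc] at this; omega
    · have := rootLabel_mem_Icc hr; simp only [Set.mem_Icc] at this; omega
    · obtain ⟨⟨_, _⟩, _, _⟩ := mem_Icc_of_childOf h; omega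
    · obtain ⟨⟨_, _⟩, _, _⟩ := mem_Icc_of_childOf h; omega

lemma childOf_node_right {l r : PBTree} {i j : ℕ} (h : r.childOf i j) :
    (node l r).childOf (i + (l.nodes + 1)) (j + (l.nodes + 1)) := by
  obtain ⟨⟨_, _⟩, _, _⟩ := mem_Icc_of_childOf h
  right; right
  simpa using h

lemma subtreeAt_zero : ∀ T : PBTree, T.subtreeAt 0 = leaf
  | leaf => rfl
  | node l _ => by rw [subtreeAt, if_neg (by omega), if_pos (by omega), subtreeAt_zero l]

lemma subtreeAt_of_nodes_lt : ∀ {T : PBTree} {k : ℕ}, T.nodes < k → T.subtreeAt k = leaf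
  | leaf, _, _ => rfl
  | node l r, k, hk => by
    simp only [nodes] at hk
    rw [subtreeAt, if_neg (by omega), if_neg (by omega), subtreeAt_of_nodes_lt (by omega)]

def lodayPairing (β x : ℕ → ℝ) : PBTree → ℝ
  | leaf => 0
  | node l r => lodayPairing β x l + val β (node l r) * x (l.nodes + 1)
      + lodayPairing β (fun k => x (k + (l.nodes + 1))) r

lemma lodayPairing_eq_sum (β : ℕ → ℝ) : ∀ (T : PBTree) (x : ℕ → ℝ),
    lodayPairing β x T = ∑ i ∈ range T.nodes, val β (T.subtreeAt (i + 1)) * x (i + 1)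
  | leaf, _ => rfl
  | node l r, x => by
    rw [lodayPairing, lodayPairing_eq_sum β l, lodayPairing_eq_sum β r,
      show (node l r).nodes = l.nodes + 1 + r.nodes by simp only [nodes]; ring,
      sum_range_add, sum_range_succ]
    have hl : ∀ i ∈ range l.nodes, (node l r).subtreeAt (i + 1) = l.subtreeAt (i + 1) := by
      intro i hi
      rw [mem_range] at hi
      rw [subtreeAt, if_neg (by omega), if_pos (by omega)]
    have hr : ∀ i, (node l r).subtreeAt (l.nodes + 1 + i + 1) = r.subtreeAt (i + 1) := by
      intro i
      rw [subtreeAt, if_neg (by omega), if_neg (by omega), add_assoc, Nat.add_sub_cancel_left]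
    have hroot : (node l r).subtreeAt (l.nodes + 1) = node l r := if_pos rfl
    simp only [hroot, hr, ← show ∀ i, l.nodes + 1 + i + 1 = i + 1 + (l.nodes + 1) by omega]
    congr 2
    exact sum_congr rfl fun i hi => by rw [hl i hi]

lemma lodayPairing_rotate (β x : ℕ → ℝ) (A B C : PBTree) :
    lodayPairing β x (node A (node B C)) = lodayPairing β x (node (node A B) C)
      + (partialSum β (A.nodes + B.nodes + C.nodes + 2) + partialSum β B.nodes
          - partialSum β (A.nodes + B.nodes + 1) - partialSum β (B.nodes + C.nodes + 1))
        * (x (A.nodes + 1) - x (A.nodes + B.nodes + 2)) := by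
  simp only [lodayPairing, val_node, nodes]
  rw [show (fun k => x (k + (B.nodes + 1) + (A.nodes + 1)))
      = fun k => x (k + (A.nodes + B.nodes + 1 + 1)) from funext fun k => congrArg x (by omega),
    show B.nodes + 1 + (A.nodes + 1) = A.nodes + B.nodes + 2 by omega,
    show A.nodes + (B.nodes + C.nodes + 1) + 1 = A.nodes + B.nodes + C.nodes + 2 by omega,
    show A.nodes + B.nodes + 1 + C.nodes + 1 = A.nodes + B.nodes + C.nodes + 2 by omega]
  ring

variable {β : ℕ → ℝ}

lemma lodayPairing_lt_rotateRight {x : ℕ → ℝ} {A B C : PBTree}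
    (hβ : StrictMonoOn β (Set.Icc 1 (A.nodes + B.nodes + C.nodes + 2)))
    (hx : x (A.nodes + B.nodes + 2) < x (A.nodes + 1)) :
    lodayPairing β x (node (node A B) C) < lodayPairing β x (node A (node B C)) := by
  rw [lodayPairing_rotate]
  nlinarith [partialSum_rotation_coeff_pos _ _ _ hβ]

lemma lodayPairing_lt_rotateLeft {x : ℕ → ℝ} {A B C : PBTree}
    (hβ : StrictMonoOn β (Set.Icc 1 (A.nodes + B.nodes + C.nodes + 2)))
    (hx : x (A.nodes + 1) < x (A.nodes + B.nodes + 2)) :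
    lodayPairing β x (node A (node B C)) < lodayPairing β x (node (node A B) C) := by
  rw [lodayPairing_rotate]
  nlinarith [partialSum_rotation_coeff_pos _ _ _ hβ]

def IsMaxHeap (T : PBTree) (x : ℕ → ℝ) : Prop := ∀ i j, T.childOf i j → x i < x j

lemma IsMaxHeap.left {l r : PBTree} {x : ℕ → ℝ} (hx : (node l r).IsMaxHeap x) :
    l.IsMaxHeap x :=
  fun i j h => hx i j (Or.inr (Or.inl h))

lemma IsMaxHeap.right {l r : PBTree} {x : ℕ → ℝ} (hx : (node l r).IsMaxHeap x) :
    r.IsMaxHeap fun k => x (k + (l.nodes + 1)) :=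
  fun _ _ h => hx _ _ (childOf_node_right h)

lemma IsMaxHeap.lt_rootLabel : ∀ {T : PBTree} {x : ℕ → ℝ}, T.IsMaxHeap x →
    ∀ k ∈ Set.Icc 1 T.nodes, k ≠ T.rootLabel → x k < x T.rootLabel
  | leaf, _, _, k, hk, _ => by simp [nodes] at hk
  | node l r, x, hx, k, ⟨hk1, hk2⟩, hkr => by
    simp only [nodes, rootLabel] at hk2 hkr ⊢
    rcases Nat.lt_or_ge k (l.nodes + 1) with hlt | hge
    · have hl : l ≠ leaf := by rintro rfl; simp [nodes] at hlt; omega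
      have hchild : x l.rootLabel < x (l.nodes + 1) := hx _ _ (Or.inl ⟨rfl, Or.inl ⟨hl, rfl⟩⟩)
      rcases eq_or_ne k l.rootLabel with rfl | hkl
      · exact hchild
      · exact (hx.left.lt_rootLabel k ⟨hk1, by omega⟩ hkl).trans hchild
    · have hr : r ≠ leaf := by rintro rfl; simp [nodes] at hk2; omega
      have hchild : x (r.rootLabel + (l.nodes + 1)) < x (l.nodes + 1) := by
        rw [add_comm]; exact hx _ _ (Or.inl ⟨rfl, Or.inr ⟨hr, rfl⟩⟩)
      obtain ⟨k, rfl⟩ : ∃ k', k = k' + (l.nodes + 1) := ⟨k - (l.nodes + 1), by omega⟩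
      rcases eq_or_ne k r.rootLabel with rfl | hkr'
      · exact hchild
      · have hk : k ∈ Set.Icc 1 r.nodes := by
          have := rootLabel_mem_Icc hr; simp only [Set.mem_Icc] at this ⊢; omega
        exact (hx.right.lt_rootLabel k hk hkr').trans hchild

lemma lodayPairing_node_sub_node {x : ℕ → ℝ} {l r l' r' : PBTree} (hl : l'.nodes = l.nodes)
    (hr : r'.nodes = r.nodes) :
    lodayPairing β x (node l' r') - lodayPairing β x (node l r)
      = (lodayPairing β x l' - lodayPairing β x l)
        + (lodayPairing β (fun k => x (k + (l.nodes + 1))) r'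
          - lodayPairing β (fun k => x (k + (l.nodes + 1))) r) := by
  simp only [lodayPairing, val_node, hl, hr]
  ring

theorem exists_rootLabel_eq : ∀ (S : PBTree) {x : ℕ → ℝ} {m : ℕ},
    StrictMonoOn β (Set.Icc 1 S.nodes) → m ∈ Set.Icc 1 S.nodes →
    (∀ k ∈ Set.Icc 1 S.nodes, k ≠ m → x k < x m) →
    ∃ S' : PBTree, S'.nodes = S.nodes ∧ S'.rootLabel = m ∧
      (S' = S ∨ lodayPairing β x S < lodayPairing β x S')
  | leaf, _, _, _, hm, _ => by simp [nodes] at hm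
  | node l r, x, m, hβ, ⟨hm1, hm2⟩, hmax => by
    simp only [nodes] at hm2 hmax hβ
    have le_of_eq_or_lt {S S' : PBTree} {y : ℕ → ℝ}
        (h : S' = S ∨ lodayPairing β y S < lodayPairing β y S') :
        lodayPairing β y S ≤ lodayPairing β y S' := h.elim (fun h => h ▸ le_rfl) le_of_lt
    rcases lt_trichotomy m (l.nodes + 1) with hlt | rfl | hgt
    · obtain ⟨l', hl'n, hl'root, hl'⟩ := exists_rootLabel_eq l (x := x)
        (hβ.mono (Set.Icc_subset_Icc_right (by omega))) ⟨hm1, by omega⟩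
        fun k hk hkm => hmax k ⟨hk.1, by have := hk.2; omega⟩ hkm
      cases l' with
      | leaf => simp [nodes] at hl'n; omega
      | node A B =>
        simp only [nodes, rootLabel] at hl'n hl'root
        have hle := lodayPairing_node_sub_node (β := β) (x := x) (l' := node A B) (r := r) hl'n rfl
        have hrot : lodayPairing β x (node (node A B) r) < lodayPairing β x (node A (node B r)) :=
          lodayPairing_lt_rotateRight (hβ.mono (Set.Icc_subset_Icc_right (by omega)))
            (by rw [show A.nodes + B.nodes + 2 = l.nodes + 1 by omega, hl'root]
                exact hmax _ ⟨by omega, by omega⟩ (by omega))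
        refine ⟨node A (node B r), by simp only [nodes]; omega, hl'root, Or.inr ?_⟩
        linarith [le_of_eq_or_lt hl']
    · exact ⟨node l r, rfl, rfl, Or.inl rfl⟩
    · obtain ⟨r', hr'n, hr'root, hr'⟩ := exists_rootLabel_eq r
        (x := fun k => x (k + (l.nodes + 1))) (m := m - (l.nodes + 1))
        (hβ.mono (Set.Icc_subset_Icc_right (by omega))) ⟨by omega, by omega⟩
        fun k hk hkm => by
          have := hmax (k + (l.nodes + 1)) ⟨by have := hk.1; omega, by have := hk.2; omega⟩
            (by omega)
          rwa [Nat.sub_add_cancel (by omega)]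
      cases r' with
      | leaf => simp [nodes] at hr'n; omega
      | node A B =>
        simp only [nodes, rootLabel] at hr'n hr'root
        have hle := lodayPairing_node_sub_node (β := β) (x := x) (l := l) (r' := node A B) rfl hr'n
        have hrot : lodayPairing β x (node l (node A B)) < lodayPairing β x (node (node l A) B) :=
          lodayPairing_lt_rotateLeft (hβ.mono (Set.Icc_subset_Icc_right (by omega)))
            (by rw [show l.nodes + A.nodes + 2 = m by omega]
                exact hmax _ ⟨by omega, by omega⟩ (by omega))
        refine ⟨node (node l A) B, by simp only [nodes]; omega,
          by simp only [rootLabel, nodes]; omega, Or.inr ?_⟩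
        linarith [le_of_eq_or_lt hr']

theorem lodayPairing_lt_of_ne : ∀ {T T' : PBTree} {x : ℕ → ℝ}, T'.nodes = T.nodes →
    StrictMonoOn β (Set.Icc 1 T.nodes) → T.IsMaxHeap x → T' ≠ T →
    lodayPairing β x T' < lodayPairing β x T
  | leaf, _, _, hn, _, _, hne => absurd (eq_leaf_of_nodes_eq_zero hn) hne
  | node l r, T', x, hn, hβ, hx, hne => by
    have hβl : StrictMonoOn β (Set.Icc 1 l.nodes) :=
      hβ.mono (Set.Icc_subset_Icc_right (by simp only [nodes]; omega))
    have hβr : StrictMonoOn β (Set.Icc 1 r.nodes) :=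
      hβ.mono (Set.Icc_subset_Icc_right (by simp only [nodes]; omega))
    have same_root : ∀ l' r' : PBTree, l'.nodes = l.nodes → r'.nodes = r.nodes →
        node l' r' ≠ node l r → lodayPairing β x (node l' r') < lodayPairing β x (node l r) := by
      intro l' r' hl hr hne'
      have hsub := lodayPairing_node_sub_node (β := β) (x := x) hl hr
      rcases eq_or_ne l' l with rfl | hl'
      · linarith [lodayPairing_lt_of_ne hr hβr hx.right fun h => hne' (h ▸ rfl)]
      · have := lodayPairing_lt_of_ne hl hβl hx.left hl'
        rcases eq_or_ne r' r with rfl | hr'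
        · linarith
        · linarith [lodayPairing_lt_of_ne hr hβr hx.right hr']
    rcases T' with _ | ⟨l', r'⟩
    · simp [nodes] at hn
    simp only [nodes] at hn
    by_cases hroot : l'.nodes = l.nodes
    · exact same_root l' r' hroot (by omega) hne
    obtain ⟨S, hSn, hSroot, hS⟩ := exists_rootLabel_eq (β := β) (node l' r') (x := x)
      (m := l.nodes + 1) (by simpa only [nodes, hn] using hβ)
      ⟨by omega, by simp only [nodes]; omega⟩
      fun k hk hkm => hx.lt_rootLabel k (by simpa only [nodes, hn] using hk) hkm
    rcases S with _ | ⟨l'', r''⟩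
    · simp [nodes] at hSn
    simp only [nodes, rootLabel] at hSn hSroot
    have hlt : lodayPairing β x (node l' r') < lodayPairing β x (node l'' r'') :=
      hS.resolve_left fun h => by injection h with h; rw [h] at hSroot; omega
    rcases eq_or_ne (node l'' r'') (node l r) with h | h
    · rwa [h] at hlt
    · exact hlt.trans (same_root l'' r'' (by omega) (by omega) h)

end PBTree

/-- `y` read on the 1-based labels of internal nodes, with junk value `0` off `1, …, d`. -/
noncomputable def labelExt {d : ℕ} (y : Fin d → ℝ) : ℕ → ℝ :=
  Function.extend (fun i : Fin d => (i : ℕ) + 1) y 0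

lemma labelExt_succ {d : ℕ} (y : Fin d → ℝ) (i : Fin d) : labelExt y (i + 1) = y i :=
  Function.Injective.extend_apply (fun _ _ h => Fin.ext (Nat.succ_injective h)) y 0 i

lemma PBTree.isMaxHeap_labelExt {d : ℕ} {T : PBTree} (hT : T.nodes = d) {y : Fin d → ℝ}
    (h : ∀ i j : Fin d, T.childOf (i + 1) (j + 1) → y i < y j) : T.IsMaxHeap (labelExt y) := by
  intro a b hab
  obtain ⟨⟨ha1, ha2⟩, hb1, hb2⟩ := mem_Icc_of_childOf hab
  obtain ⟨i, rfl⟩ : ∃ i : Fin d, (i : ℕ) + 1 = a := ⟨⟨a - 1, by omega⟩, by simp only; omega⟩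
  obtain ⟨j, rfl⟩ : ∃ j : Fin d, (j : ℕ) + 1 = b := ⟨⟨b - 1, by omega⟩, by simp only; omega⟩
  rw [labelExt_succ, labelExt_succ]
  exact h i j hab

lemma betaT_zero (β : ℕ → ℝ) (T : PBTree) : betaT β T 0 = 0 := by
  rw [betaT, PBTree.subtreeAt_zero, PBTree.val]

lemma betaT_of_nodes_lt (β : ℕ → ℝ) {T : PBTree} {k : ℕ} (h : T.nodes < k) : betaT β T k = 0 := by
  rw [betaT, PBTree.subtreeAt_of_nodes_lt h, PBTree.val]

lemma sum_betaT_mul_eq_lodayPairing (β : ℕ → ℝ) {d : ℕ} {T : PBTree} (hT : T.nodes = d)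
    (y : Fin d → ℝ) :
    ∑ i : Fin d, betaT β T (i + 1) * y i = T.lodayPairing β (labelExt y) := by
  subst hT
  rw [PBTree.lodayPairing_eq_sum, ← Fin.sum_univ_eq_sum_range]
  simp only [labelExt_succ, betaT]

lemma TAppropriate.strictMono {d : ℕ} {α β : ℕ → ℝ} (happ : TAppropriate d α β) {T : PBTree}
    (hT : T.nodes = d) :
    StrictMono fun k : Fin (d + 1) => α (k + 1) + betaT β T k - betaT β T (k + 1) := by
  intro k k' hkk
  simpa using happ.2.2 T hT (k + 1) (k' + 1) (by omega) (by simpa using hkk) (by omega)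

lemma sum_mul_vPT (d : ℕ) (α β : ℕ → ℝ) (π : Equiv.Perm (Fin (d + 1))) (T : PBTree)
    (w : Fin (d + 1) → ℝ) :
    ∑ i, w i * vPT d α β π T i
      = ∑ k : Fin (d + 1), α (k + 1) * w (π.symm k)
        + ∑ i : Fin d, betaT β T (i + 1) * Dpi π i w := by
  change w ⬝ᵥ vPT d α β π T = _
  simp [vPT, Dpi, dotProduct_add, dotProduct_sum, dotProduct_smul, dotProduct_sub,
    dotProduct_single, mul_comm]

lemma sum_mul_vPT_eq_sum_mul_comp_symm {d : ℕ} (α β : ℕ → ℝ) (π : Equiv.Perm (Fin (d + 1)))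
    {T : PBTree} (hT : T.nodes = d) (w : Fin (d + 1) → ℝ) :
    ∑ i, w i * vPT d α β π T i
      = ∑ k : Fin (d + 1), (α (k + 1) + betaT β T k - betaT β T (k + 1)) * w (π.symm k) := by
  rw [sum_mul_vPT]
  simp only [Dpi]
  rw [sum_mul_succ_sub_castSucc (betaT β T) (fun k => w (π.symm k)) (betaT_zero β T)
    (betaT_of_nodes_lt β (by omega)), ← sum_add_distrib]
  exact sum_congr rfl fun k _ => by ring

theorem sum_mul_vPT_perm_le {d : ℕ} {α β : ℕ → ℝ} (happ : TAppropriate d α β)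
    {π π' : Equiv.Perm (Fin (d + 1))} {T : PBTree} (hT : T.nodes = d) {w : Fin (d + 1) → ℝ}
    (hw : ∀ i, 0 < Dpi π i w) :
    ∑ i, w i * vPT d α β π' T i ≤ ∑ i, w i * vPT d α β π T i ∧
      (π' ≠ π → ∑ i, w i * vPT d α β π' T i < ∑ i, w i * vPT d α β π T i) := by
  have hu : StrictMono fun k => w (π.symm k) :=
    Fin.strictMono_iff_lt_succ.2 fun i => sub_pos.1 (hw i)
  have hγ := happ.strictMono hT
  have hcomp : ∀ k, w (π'.symm k) = w (π.symm ((π * π'⁻¹) k)) := by simp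
  simp only [sum_mul_vPT_eq_sum_mul_comp_symm α β _ hT w, hcomp]
  refine ⟨(hγ.monotone.monovary hu.monotone).sum_mul_comp_perm_le_sum_mul,
    fun hne => hγ.sum_mul_comp_perm_lt_sum_mul hu ?_⟩
  rwa [Ne, mul_inv_eq_one, eq_comm]

theorem sum_mul_vPT_tree_le {d : ℕ} (α : ℕ → ℝ) {β : ℕ → ℝ} (hβ : StrictMonoOn β (Set.Icc 1 d))
    {π : Equiv.Perm (Fin (d + 1))} {T T' : PBTree} (hT : T.nodes = d) (hT' : T'.nodes = d)
    {w : Fin (d + 1) → ℝ}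
    (hw : ∀ i j : Fin d, T.childOf (i.1 + 1) (j.1 + 1) → Dpi π i w < Dpi π j w) :
    ∑ i, w i * vPT d α β π T' i ≤ ∑ i, w i * vPT d α β π T i ∧
      (T' ≠ T → ∑ i, w i * vPT d α β π T' i < ∑ i, w i * vPT d α β π T i) := by
  have hlt := fun hne => PBTree.lodayPairing_lt_of_ne (hT'.trans hT.symm) (hT ▸ hβ)
    (PBTree.isMaxHeap_labelExt hT hw) hne
  simp only [sum_mul_vPT, sum_betaT_mul_eq_lodayPairing β hT, sum_betaT_mul_eq_lodayPairing β hT']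
  exact ⟨(eq_or_ne T' T).elim (fun h => h ▸ le_rfl) fun h => (add_lt_add_right (hlt h) _).le,
    fun h => add_lt_add_right (hlt h) _⟩

/-- Lemma 6.6: for a `𝒯`-appropriate pair `(α,β)` and every `w ∈ σ°(π,T)` one has
`⟨w, v_{π',T'}^{(α,β)}⟩ ≤ ⟨w, v_{π,T}^{(α,β)}⟩`, with equality iff `(π,T) = (π',T')`. -/
theorem nested_vertex_maximizes (d : ℕ) (α β : ℕ → ℝ) (happ : TAppropriate d α β)
    (π π' : Equiv.Perm (Fin (d + 1))) (T T' : PBTree)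
    (hT : T.nodes = d) (hT' : T'.nodes = d)
    (w : Fin (d + 1) → ℝ) (hw : w ∈ sigmaPTOpen d π T) :
    (∑ i, w i * vPT d α β π' T' i) ≤ (∑ i, w i * vPT d α β π T i) ∧
    ((∑ i, w i * vPT d α β π T i) = (∑ i, w i * vPT d α β π' T' i) ↔ π = π' ∧ T = T') := by
  obtain ⟨hperm_le, hperm_lt⟩ := sum_mul_vPT_perm_le (π' := π') happ hT' hw.1
  obtain ⟨htree_le, htree_lt⟩ := sum_mul_vPT_tree_le α
    (fun i hi j hj hij => happ.2.1 i j hi.1 hij hj.2) hT hT' hw.2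
  refine ⟨hperm_le.trans htree_le, fun heq => ?_, fun ⟨hπ, hTT⟩ => by rw [hπ, hTT]⟩
  by_contra hne
  rcases not_and_or.1 hne with hπ | hTT
  · linarith [hperm_lt (Ne.symm hπ)]
  · linarith [htree_lt (Ne.symm hTT)]
end

section
/- Let b : [d+1] → [k] be a surjection with k ≥ 2. Then the cone { w ∈ ℝ^{d+1} : w_i = w_j whenever b(i) = b(j); w_i ≤ w_j whenever b(j) = b(i) + 1; and w_j − w_i = w_q − w_p whenever b(j) = b(i) + 1 and b(q) = b(p) + 1 } equals { λ·u + μ·𝟙 : λ ≥ 0, μ ∈ ℝ }, where u ∈ ℝ^{d+1} is the vector with j-th coordinate b(j) and 𝟙 = (1,…,1) ∈ ℝ^{d+1}. -/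
/-! A vector in the cone is constant on each block, so it is a function of the block index; the
common increment `δ ≥ 0` between consecutive blocks then forces, by induction on the block index,
`w j = w i₀ + δ · b(j)` with `i₀` in the first block. Surjectivity of `b` is what makes every
block index below `b(j)` reachable by such steps. -/

section LevelCone

variable {ι : Type*} (c : ι → ℕ)

def levelCone : Set (ι → ℝ) :=
  {w | (∀ i j, c i = c j → w i = w j) ∧
    (∀ i j, c j = c i + 1 → w i ≤ w j) ∧
    (∀ i j p q, c j = c i + 1 → c q = c p + 1 → w j - w i = w q - w p)}

variable {c}

lemma exists_nonneg_forall_succ_sub_eq {w : ι → ℝ}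
    (hmono : ∀ i j, c j = c i + 1 → w i ≤ w j)
    (heq : ∀ i j p q, c j = c i + 1 → c q = c p + 1 → w j - w i = w q - w p) :
    ∃ δ, 0 ≤ δ ∧ ∀ i j, c j = c i + 1 → w j - w i = δ := by
  by_cases h : ∃ p q, c q = c p + 1
  · obtain ⟨p, q, hpq⟩ := h
    exact ⟨w q - w p, sub_nonneg.2 (hmono p q hpq), fun i j hij => heq i j p q hij hpq⟩
  · push Not at h
    exact ⟨0, le_rfl, fun i j hij => absurd hij (h i j)⟩

lemma eq_add_mul_of_forall_succ_sub_eq {w : ι → ℝ} {δ : ℝ}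
    (hconst : ∀ i j, c i = c j → w i = w j)
    (hstep : ∀ i j, c j = c i + 1 → w j - w i = δ)
    (hdown : ∀ j, ∀ n ≤ c j, n ∈ Set.range c) {i₀ : ι} (h₀ : c i₀ = 0) (j : ι) :
    w j = w i₀ + c j * δ := by
  suffices ∀ n j, c j = n → w j = w i₀ + n * δ from this _ j rfl
  intro n
  induction n with
  | zero => exact fun j hj => by simp [hconst j i₀ (hj.trans h₀.symm)]
  | succ n ih =>
    intro j hj
    obtain ⟨i, hi⟩ := hdown j n (by omega)
    have hwj := hstep i j (by omega)
    rw [ih i hi] at hwj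
    push_cast
    linarith

theorem levelCone_eq [Nonempty ι] (hdown : ∀ j, ∀ n ≤ c j, n ∈ Set.range c) :
    levelCone c = {w | ∃ l : ℝ, 0 ≤ l ∧ ∃ m : ℝ, w = fun j => l * c j + m} := by
  ext w
  constructor
  · rintro ⟨hconst, hmono, heq⟩
    obtain ⟨δ, hδ, hstep⟩ := exists_nonneg_forall_succ_sub_eq hmono heq
    obtain ⟨i₀, h₀⟩ := hdown (Classical.arbitrary ι) 0 (Nat.zero_le _)
    refine ⟨δ, hδ, w i₀, funext fun j => ?_⟩
    rw [eq_add_mul_of_forall_succ_sub_eq hconst hstep hdown h₀ j]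
    ring
  · rintro ⟨l, hl, m, rfl⟩
    refine ⟨fun i j hij => by simp only [hij], fun i j hij => ?_, fun i j p q hij hpq => ?_⟩
    · simp only [hij, Nat.cast_succ]
      linarith
    · simp only [hij, hpq, Nat.cast_succ]
      ring

end LevelCone

theorem ray_of_ordered_set_partition_general (d k : ℕ)
    (b : Fin (d + 1) → Fin k) (hb : Function.Surjective b) :
    {w : Fin (d + 1) → ℝ |
        (∀ i j, b i = b j → w i = w j) ∧
        (∀ i j, (b j).1 = (b i).1 + 1 → w i ≤ w j) ∧
        (∀ i j p q, (b j).1 = (b i).1 + 1 → (b q).1 = (b p).1 + 1 →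
          w j - w i = w q - w p)}
      = {w | ∃ l : ℝ, 0 ≤ l ∧ ∃ m : ℝ,
          w = fun j => l * (((b j).1 + 1 : ℕ) : ℝ) + m} := by
  have hdown : ∀ j, ∀ n ≤ (b j).1, n ∈ Set.range fun i => (b i).1 := fun j n hn =>
    let ⟨i, hi⟩ := hb ⟨n, by omega⟩
    ⟨i, by simp [hi]⟩
  have hcone := levelCone_eq hdown
  simp only [levelCone, Fin.val_inj] at hcone
  rw [hcone]
  ext w
  constructor
  · rintro ⟨l, hl, m, rfl⟩
    exact ⟨l, hl, m - l, funext fun j => by push_cast; ring⟩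
  · rintro ⟨l, hl, m, rfl⟩
    exact ⟨l, hl, m + l, funext fun j => by push_cast; ring⟩

/-- Part of Lemma 5.21 (2): for an ordered set partition of `[d+1]` with `k ≥ 2` blocks,
encoded by a surjection `b : [d+1] → [k]` (the block index of `j` being `(b j) + 1`), the cone
of vectors `w` that are constant on each block, weakly increasing from each block to the next,
and with all consecutive increments equal, is exactly `{λ u + μ 𝟙 : λ ≥ 0, μ ∈ ℝ}` where `u`
is the vector whose `j`-th coordinate is the block index of `j`. -/
theorem ray_of_ordered_set_partition (d k : ℕ) (hk : 2 ≤ k)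
    (b : Fin (d + 1) → Fin k) (hb : Function.Surjective b) :
    {w : Fin (d + 1) → ℝ |
        (∀ i j, b i = b j → w i = w j) ∧
        (∀ i j, (b j).1 = (b i).1 + 1 → w i ≤ w j) ∧
        (∀ i j p q, (b j).1 = (b i).1 + 1 → (b q).1 = (b p).1 + 1 →
          w j - w i = w q - w p)}
      = {w | ∃ l : ℝ, 0 ≤ l ∧ ∃ m : ℝ,
          w = fun j => l * (((b j).1 + 1 : ℕ) : ℝ) + m} :=
  ray_of_ordered_set_partition_general d k b hb
end
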